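/- arXiv:1511.00103 — 9 statements merged into one kernel-verified Lean document; each statement's English description precedes it below -/
import Mathlib

section
/- Let N ≥ 3 and 2 ≤ k ≤ N. If the density matrix ρ on H = H_1 ⊗ … ⊗ H_N is k-separable, then F(ρ,φ) ≤ 0, where F(ρ,φ) := Σ_{1≤i,j,j'≤N pairwise distinct} ( |⟨φ_{i,j}|ρ|φ_{i,j'}⟩| − sqrt(⟨φ_{i,j}| ⊗ ⟨φ_{i,j'}| Π_j (ρ⊗ρ) Π_j |φ_{i,j}⟩ ⊗ |φ_{i,j'}⟩) ) − N_k · Σ_{1≤i≠j≤N} ⟨φ_{i,j}|ρ|φ_{i,j}⟩ and N_k := max{2(N−k−1), N−k}. -/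
open scoped BigOperators ComplexOrder

noncomputable section

namespace Sep

variable {N : ℕ} {d : Fin N → ℕ}

/-- The configuration (computational-basis index) of the product basis state with
local state `|1⟩` in the factors indexed by `S` and `|0⟩` in all other factors. -/
def basisCfg (hd : ∀ i, 2 ≤ d i) (S : Finset (Fin N)) : (i : Fin N) → Fin (d i) :=
  fun i => if i ∈ S then ⟨1, by have := hd i; omega⟩ else ⟨0, by have := hd i; omega⟩

/-- The outer product `|ψ⟩⟨ψ|` as a matrix in the computational basis. -/
def outer (ψ : ((i : Fin N) → Fin (d i)) → ℂ) :
    Matrix ((i : Fin N) → Fin (d i)) ((i : Fin N) → Fin (d i)) ℂ :=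
  Matrix.vecMulVec ψ (star ψ)

/-- `⟨a| ⊗ ⟨b| Π_j (ρ ⊗ ρ) Π_j |a⟩ ⊗ |b⟩`, where `Π_j` is the unitary on `H ⊗ H`
swapping the two copies of the `j`-th factor.  Since `Π_j |a⟩ ⊗ |b⟩` is the
basis vector indexed by the pair of configurations obtained from `(a, b)` by
exchanging the `j`-th coordinates, this equals the corresponding diagonal
entry of `ρ ⊗ ρ`. -/
def swapQuad (ρ : Matrix ((i : Fin N) → Fin (d i)) ((i : Fin N) → Fin (d i)) ℂ)
    (j : Fin N) (a b : (i : Fin N) → Fin (d i)) : ℂ :=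
  ρ (Function.update a j (b j)) (Function.update a j (b j)) *
    ρ (Function.update b j (a j)) (Function.update b j (a j))

/-- A pure state (state vector) is `k`-separable if `{1,…,N}` can be partitioned into
`k` (pairwise disjoint, nonempty) parts — given by the fibers of a surjection
`P : Fin N → Fin k` — such that `ψ` factorizes as a product of `k` functions, the
`l`-th of which depends only on the coordinates in part `l`. -/
def kSepPure (k : ℕ) (ψ : ((i : Fin N) → Fin (d i)) → ℂ) : Prop :=
  ∃ P : Fin N → Fin k, Function.Surjective P ∧
    ∃ f : Fin k → (((i : Fin N) → Fin (d i)) → ℂ),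
      (∀ l x y, (∀ i, P i = l → x i = y i) → f l x = f l y) ∧
      ∀ x, ψ x = ∏ l, f l x

/-- A density matrix: positive semidefinite with trace 1. -/
def IsDensityMatrix
    (ρ : Matrix ((i : Fin N) → Fin (d i)) ((i : Fin N) → Fin (d i)) ℂ) : Prop :=
  ρ.PosSemidef ∧ ρ.trace = 1

/-- A mixed state is `k`-separable if it is a convex combination of projectors onto
`k`-separable pure (unit) states, possibly separable w.r.t. different partitions. -/
def kSep (k : ℕ)
    (ρ : Matrix ((i : Fin N) → Fin (d i)) ((i : Fin N) → Fin (d i)) ℂ) : Prop :=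
  ∃ (n : ℕ) (p : Fin n → ℝ) (ψ : Fin n → ((i : Fin N) → Fin (d i)) → ℂ),
    (∀ s, 0 ≤ p s) ∧ (∑ s, p s = 1) ∧
    (∀ s, ∑ x, Complex.normSq (ψ s x) = 1) ∧
    (∀ s, kSepPure k (ψ s)) ∧
    ρ = ∑ s, (p s : ℂ) • outer (ψ s)

end Sep

/-!
Both sides of the criterion are convex-linear in `ρ`: the off-diagonal moduli obey the triangle
inequality, the square roots of products of diagonal entries are bounded below by Cauchy–Schwarz,
and the diagonal term is linear. It therefore suffices to treat one `k`-separable pure state `ψ`.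
If `j` and `j'` lie in different parts of its partition, swapping the `j`-th coordinates of the
configurations `φ_{i,j}` and `φ_{i,j'}` leaves `ψ(φ_{i,j}) ψ(φ_{i,j'})` unchanged, so the term
vanishes. The surviving terms are bounded by AM–GM, and each `j` has at most `N - k` partners
`j'` in its own part, which gives the bound with `N - k ≤ N_k`.
-/

open Finset

namespace Sep

section OuterProductMixture

variable {X : Type*} {n : ℕ} {p : Fin n → ℝ} {ψ : Fin n → X → ℂ}
  {ρ : Matrix X X ℂ}

lemma apply_eq_sum_of_eq_sum_vecMulVec
    (hρ : ρ = ∑ s, (p s : ℂ) • Matrix.vecMulVec (ψ s) (star (ψ s))) (x y : X) :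
    ρ x y = ∑ s, (p s : ℂ) * (ψ s x * star (ψ s y)) := by
  simp [hρ, Matrix.sum_apply, Matrix.vecMulVec_apply]

lemma apply_self_eq_sum_of_eq_sum_vecMulVec
    (hρ : ρ = ∑ s, (p s : ℂ) • Matrix.vecMulVec (ψ s) (star (ψ s))) (x : X) :
    ρ x x = ((∑ s, p s * ‖ψ s x‖ ^ 2 : ℝ) : ℂ) := by
  simp [apply_eq_sum_of_eq_sum_vecMulVec hρ, Complex.mul_conj, Complex.normSq_eq_norm_sq]

lemma norm_apply_le_sum_of_eq_sum_vecMulVec (hp : ∀ s, 0 ≤ p s)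
    (hρ : ρ = ∑ s, (p s : ℂ) • Matrix.vecMulVec (ψ s) (star (ψ s))) (x y : X) :
    ‖ρ x y‖ ≤ ∑ s, p s * (‖ψ s x‖ * ‖ψ s y‖) := by
  rw [apply_eq_sum_of_eq_sum_vecMulVec hρ]
  refine (norm_sum_le _ _).trans_eq (sum_congr rfl fun s _ => ?_)
  simp [abs_of_nonneg (hp s)]

lemma sum_mul_le_sqrt_of_eq_sum_vecMulVec (hp : ∀ s, 0 ≤ p s)
    (hρ : ρ = ∑ s, (p s : ℂ) • Matrix.vecMulVec (ψ s) (star (ψ s))) (x y : X) :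
    ∑ s, p s * (‖ψ s x‖ * ‖ψ s y‖) ≤ √((ρ x x * ρ y y).re) := by
  rw [apply_self_eq_sum_of_eq_sum_vecMulVec hρ, apply_self_eq_sum_of_eq_sum_vecMulVec hρ,
    ← Complex.ofReal_mul, Complex.ofReal_re,
    Real.sqrt_mul (sum_nonneg fun s _ => by have := hp s; positivity)]
  refine le_of_eq_of_le (sum_congr rfl fun s _ => ?_)
    (Real.sum_sqrt_mul_sqrt_le _ (fun s => by have := hp s; positivity)
      (fun s => by have := hp s; positivity))
  rw [Real.sqrt_mul (hp s), Real.sqrt_mul (hp s), Real.sqrt_sq (norm_nonneg _),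
    Real.sqrt_sq (norm_nonneg _), mul_mul_mul_comm, Real.mul_self_sqrt (hp s)]

end OuterProductMixture

section Combinatorics

variable {ι κ : Type*} [Fintype ι] [Fintype κ]

lemma sum_sum_ite_mul_le_sum_card_mul_sq (R : ι → ι → Prop) [DecidableRel R]
    (hR : ∀ j j', R j j' → R j' j) (u : ι → ℝ) :
    ∑ j, ∑ j', (if R j j' then u j * u j' else 0) ≤ ∑ j, #{j' | R j j'} * u j ^ 2 := by
  have hsymm : ∑ j, ∑ j', (if R j j' then u j' ^ 2 else 0) =
      ∑ j, ∑ j', (if R j j' then u j ^ 2 else 0) := by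
    rw [sum_comm]
    exact sum_congr rfl fun j _ => sum_congr rfl fun j' _ =>
      if_congr ⟨hR j' j, hR j j'⟩ rfl rfl
  calc ∑ j, ∑ j', (if R j j' then u j * u j' else 0)
      ≤ ∑ j, ∑ j', ((if R j j' then u j ^ 2 else 0) + (if R j j' then u j' ^ 2 else 0)) / 2 := by
        gcongr with j _ j' _
        split_ifs
        · nlinarith [sq_nonneg (u j - u j')]
        · simp
    _ = ∑ j, #{j' | R j j'} * u j ^ 2 := by
        simp only [add_div, sum_add_distrib, ← sum_div]
        rw [hsymm]
        simp only [← sum_filter, sum_const, nsmul_eq_mul]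
        ring

lemma card_fiber_add_card_le_of_surjective [DecidableEq κ] (P : ι → κ)
    (hP : Function.Surjective P) (x : ι) :
    #{y | P y = P x} + Fintype.card κ ≤ Fintype.card ι + 1 := by
  classical
  have hsurj : (univ.erase (P x) : Finset κ) ⊆ image P {y | ¬P y = P x} := by
    intro l hl
    obtain ⟨y, rfl⟩ := hP l
    exact mem_image_of_mem P (by simpa using (mem_erase.1 hl).1)
  have := (card_le_card hsurj).trans card_image_le
  have := card_filter_add_card_filter_not (s := univ) (fun y => P y = P x)
  rw [card_erase_of_mem (mem_univ _), card_univ] at *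
  have : 0 < Fintype.card κ := Fintype.card_pos_iff.2 ⟨P x⟩
  omega

end Combinatorics

lemma prod_update_mul_prod_update_eq {ι κ : Type*} [DecidableEq ι] [Fintype κ]
    {α : ι → Type*} (P : ι → κ) (f : κ → ((i : ι) → α i) → ℂ)
    (hf : ∀ l x y, (∀ i, P i = l → x i = y i) → f l x = f l y)
    {j : ι} {a b : (i : ι) → α i} (hab : ∀ i ≠ j, P i = P j → a i = b i) :
    (∏ l, f l (Function.update a j (b j))) * ∏ l, f l (Function.update b j (a j)) =
      (∏ l, f l a) * ∏ l, f l b := by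
  rw [← prod_mul_distrib, ← prod_mul_distrib]
  refine prod_congr rfl fun l _ => ?_
  by_cases hl : l = P j
  · subst hl
    have h1 : f (P j) (Function.update a j (b j)) = f (P j) b := by
      refine hf _ _ _ fun i hi => ?_
      rcases eq_or_ne i j with rfl | hij
      · simp
      · rw [Function.update_of_ne hij, hab i hij hi]
    have h2 : f (P j) (Function.update b j (a j)) = f (P j) a := by
      refine hf _ _ _ fun i hi => ?_
      rcases eq_or_ne i j with rfl | hij
      · simp
      · rw [Function.update_of_ne hij, hab i hij hi]
    rw [h1, h2, mul_comm]
  · have hne : ∀ i, P i = l → i ≠ j := fun i hi h => hl (h ▸ hi.symm)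
    rw [hf l (Function.update a j (b j)) a fun i hi => Function.update_of_ne (hne i hi) _ _,
      hf l (Function.update b j (a j)) b fun i hi => Function.update_of_ne (hne i hi) _ _]

section TwoExcitations

variable {N : ℕ} {d : Fin N → ℕ} (hd : ∀ i, 2 ≤ d i)

-- The first sum of `𝓕(|ψ⟩⟨ψ|, φ)`: for a pure state the square root of `swapQuad` is a product
-- of two moduli.
def twoExcitationGap (ψ : ((i : Fin N) → Fin (d i)) → ℂ) : ℝ :=
  ∑ i, ∑ j, ∑ j', if i ≠ j ∧ i ≠ j' ∧ j ≠ j' then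
    ‖ψ (basisCfg hd {i, j})‖ * ‖ψ (basisCfg hd {i, j'})‖ -
      ‖ψ (Function.update (basisCfg hd {i, j}) j (basisCfg hd {i, j'} j))‖ *
        ‖ψ (Function.update (basisCfg hd {i, j'}) j (basisCfg hd {i, j} j))‖
  else 0

def twoExcitationWeight (ψ : ((i : Fin N) → Fin (d i)) → ℂ) : ℝ :=
  ∑ i, ∑ j, if i ≠ j then ‖ψ (basisCfg hd {i, j})‖ ^ 2 else 0

lemma twoExcitationWeight_nonneg (ψ : ((i : Fin N) → Fin (d i)) → ℂ) :
    0 ≤ twoExcitationWeight hd ψ :=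
  sum_nonneg fun i _ => sum_nonneg fun j _ => by split_ifs <;> positivity

lemma basisCfg_pair_apply_eq {i j j' i' : Fin N} (hj : i' ≠ j) (hj' : i' ≠ j') :
    basisCfg hd {i, j} i' = basisCfg hd {i, j'} i' := by
  simp [basisCfg, hj, hj']

lemma twoExcitationGap_le_of_kSepPure {k : ℕ} {ψ : ((i : Fin N) → Fin (d i)) → ℂ}
    (hψ : kSepPure k ψ) :
    twoExcitationGap hd ψ ≤ (N - k : ℕ) * twoExcitationWeight hd ψ := by
  classical
  obtain ⟨P, hP, f, hf, hψf⟩ := hψ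
  set u : Fin N → Fin N → ℝ := fun i j => ‖ψ (basisCfg hd {i, j})‖
  set R : Fin N → Fin N → Fin N → Prop := fun i j j' => (i ≠ j ∧ i ≠ j' ∧ j ≠ j') ∧ P j = P j'
  -- Across different parts of the partition the swap does not change `|ψ a| |ψ b|`.
  have hterm : ∀ i j j', (if i ≠ j ∧ i ≠ j' ∧ j ≠ j' then
      u i j * u i j' -
        ‖ψ (Function.update (basisCfg hd {i, j}) j (basisCfg hd {i, j'} j))‖ *
          ‖ψ (Function.update (basisCfg hd {i, j'}) j (basisCfg hd {i, j} j))‖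
      else 0) ≤ if R i j j' then u i j * u i j' else 0 := by
    intro i j j'
    by_cases hijj : i ≠ j ∧ i ≠ j' ∧ j ≠ j'
    · by_cases hPj : P j = P j'
      · simp only [R, if_pos hijj, if_pos (And.intro hijj hPj)]
        exact sub_le_self _ (by positivity)
      · have hab : ∀ i' ≠ j, P i' = P j →
            basisCfg hd {i, j} i' = basisCfg hd {i, j'} i' := fun i' hi' hPi' =>
          basisCfg_pair_apply_eq hd hi' fun h => hPj (h ▸ hPi'.symm)
        have hswap := prod_update_mul_prod_update_eq P f hf hab
        simp only [← hψf] at hswap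
        simp only [R, u, if_pos hijj, hPj, and_false, if_false, ← norm_mul, hswap, sub_self,
          le_refl]
    · rw [if_neg hijj, if_neg fun h => hijj h.1]
  have hcard : ∀ i j, #{j' | R i j j'} * u i j ^ 2 ≤
      if i ≠ j then (N - k : ℕ) * ‖ψ (basisCfg hd {i, j})‖ ^ 2 else 0 := by
    intro i j
    by_cases hij : i = j
    · simp [R, hij]
    · rw [if_pos hij]
      refine mul_le_mul_of_nonneg_right ?_ (sq_nonneg _)
      have hsub : ({j' | R i j j'} : Finset (Fin N)) ⊆ ({y | P y = P j} : Finset _).erase j :=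
        fun j' hj' => by
          simp only [R, mem_filter, mem_univ, true_and] at hj'
          simpa [hj'.1.2.2.symm] using hj'.2.symm
      have := card_fiber_add_card_le_of_surjective P hP j
      have := card_le_card hsub
      rw [card_erase_of_mem (by simp)] at this
      simp only [Fintype.card_fin] at *
      exact_mod_cast (by omega : #{j' | R i j j'} ≤ N - k)
  calc twoExcitationGap hd ψ
      ≤ ∑ i, ∑ j, ∑ j', if R i j j' then u i j * u i j' else 0 := by
        unfold twoExcitationGap
        gcongr with i _ j _ j' _
        exact hterm i j j'
    _ ≤ ∑ i, ∑ j, #{j' | R i j j'} * u i j ^ 2 :=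
        sum_le_sum fun i _ => sum_sum_ite_mul_le_sum_card_mul_sq (R i)
          (fun j j' h => ⟨⟨h.1.2.1, h.1.1, h.1.2.2.symm⟩, h.2.symm⟩) (u i)
    _ ≤ _ := by
        simp only [twoExcitationWeight, mul_sum, mul_ite, mul_zero]
        gcongr with i _ j _
        exact hcard i j

variable {n : ℕ} {p : Fin n → ℝ} {ψ : Fin n → ((i : Fin N) → Fin (d i)) → ℂ}
  {ρ : Matrix ((i : Fin N) → Fin (d i)) ((i : Fin N) → Fin (d i)) ℂ}

lemma sum_norm_sub_sqrt_swapQuad_le (hp : ∀ s, 0 ≤ p s)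
    (hρ : ρ = ∑ s, (p s : ℂ) • outer (ψ s)) :
    (∑ i, ∑ j, ∑ j', if i ≠ j ∧ i ≠ j' ∧ j ≠ j' then
        ‖ρ (basisCfg hd {i, j}) (basisCfg hd {i, j'})‖ -
          √((swapQuad ρ j (basisCfg hd {i, j}) (basisCfg hd {i, j'})).re)
      else 0) ≤ ∑ s, p s * twoExcitationGap hd (ψ s) := by
  calc _ ≤ ∑ i, ∑ j, ∑ j', ∑ s, p s * if i ≠ j ∧ i ≠ j' ∧ j ≠ j' then
        ‖ψ s (basisCfg hd {i, j})‖ * ‖ψ s (basisCfg hd {i, j'})‖ -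
          ‖ψ s (Function.update (basisCfg hd {i, j}) j (basisCfg hd {i, j'} j))‖ *
            ‖ψ s (Function.update (basisCfg hd {i, j'}) j (basisCfg hd {i, j} j))‖
        else 0 := by
        gcongr with i _ j _ j' _
        split_ifs
        · simp only [mul_sub, sum_sub_distrib]
          exact sub_le_sub (norm_apply_le_sum_of_eq_sum_vecMulVec hp hρ _ _)
            (sum_mul_le_sqrt_of_eq_sum_vecMulVec hp hρ _ _)
        · simp
    _ = _ := by
        simp only [twoExcitationGap, mul_sum]
        exact (sum_congr rfl fun i _ => (sum_congr rfl fun j _ => sum_comm).trans sum_comm).trans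
          sum_comm

lemma sum_re_apply_self_eq (hρ : ρ = ∑ s, (p s : ℂ) • outer (ψ s)) :
    (∑ i, ∑ j, if i ≠ j then (ρ (basisCfg hd {i, j}) (basisCfg hd {i, j})).re else 0) =
      ∑ s, p s * twoExcitationWeight hd (ψ s) := by
  simp only [twoExcitationWeight, mul_sum]
  refine (sum_congr rfl fun i _ => sum_congr rfl fun j _ => ?_).trans
    ((sum_congr rfl fun i _ => sum_comm).trans sum_comm)
  by_cases hij : i ≠ j
  · simp only [if_pos hij, apply_self_eq_sum_of_eq_sum_vecMulVec hρ, Complex.ofReal_re]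
  · simp [hij]

end TwoExcitations

end Sep

open Sep in
theorem dicke_kSep_criterion_two_excitations_general
    {N : ℕ} {d : Fin N → ℕ} (hd : ∀ i, 2 ≤ d i)
    (k : ℕ)
    (ρ : Matrix ((i : Fin N) → Fin (d i)) ((i : Fin N) → Fin (d i)) ℂ)
    (hsep : kSep k ρ) :
    (∑ i : Fin N, ∑ j : Fin N, ∑ j' : Fin N,
        if i ≠ j ∧ i ≠ j' ∧ j ≠ j' then
          ‖ρ (basisCfg hd {i, j}) (basisCfg hd {i, j'})‖ -
            Real.sqrt ((swapQuad ρ j (basisCfg hd {i, j}) (basisCfg hd {i, j'})).re)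
        else 0) -
      ((max (2 * (N - k - 1)) (N - k) : ℕ) : ℝ) *
        ∑ i : Fin N, ∑ j : Fin N,
          (if i ≠ j then (ρ (basisCfg hd {i, j}) (basisCfg hd {i, j})).re else 0)
      ≤ 0 := by
  obtain ⟨n, p, ψ, hp, -, -, hψ, hρ⟩ := hsep
  rw [sub_nonpos, sum_re_apply_self_eq hd hρ]
  calc _ ≤ ∑ s, p s * twoExcitationGap hd (ψ s) := sum_norm_sub_sqrt_swapQuad_le hd hp hρ
    _ ≤ ∑ s, p s * ((N - k : ℕ) * twoExcitationWeight hd (ψ s)) :=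
        sum_le_sum fun s _ => mul_le_mul_of_nonneg_left
          (twoExcitationGap_le_of_kSepPure hd (hψ s)) (hp s)
    _ = (N - k : ℕ) * ∑ s, p s * twoExcitationWeight hd (ψ s) := by
        simp only [mul_sum, mul_left_comm]
    _ ≤ _ := mul_le_mul_of_nonneg_right (by exact_mod_cast le_max_right _ _)
        (sum_nonneg fun s _ => mul_nonneg (hp s) (twoExcitationWeight_nonneg hd (ψ s)))

open Sep in
/-- Theorem 1 of the paper: if `ρ` is `k`-separable then `𝓕(ρ,φ) ≤ 0`, where
`𝓕(ρ,φ) = Σ_{i,j,j' pairwise distinct} (|⟨φ_{i,j}|ρ|φ_{i,j'}⟩| −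
sqrt(⟨φ_{i,j}|⊗⟨φ_{i,j'}| Π_j ρ⊗ρ Π_j |φ_{i,j}⟩⊗|φ_{i,j'}⟩)) −
N_k Σ_{i≠j} ⟨φ_{i,j}|ρ|φ_{i,j}⟩` and `N_k = max{2(N−k−1), N−k}`. -/
theorem dicke_kSep_criterion_two_excitations
    {N : ℕ} {d : Fin N → ℕ} (hN : 3 ≤ N) (hd : ∀ i, 2 ≤ d i)
    (k : ℕ) (hk2 : 2 ≤ k) (hkN : k ≤ N)
    (ρ : Matrix ((i : Fin N) → Fin (d i)) ((i : Fin N) → Fin (d i)) ℂ)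
    (hρ : IsDensityMatrix ρ) (hsep : kSep k ρ) :
    (∑ i : Fin N, ∑ j : Fin N, ∑ j' : Fin N,
        if i ≠ j ∧ i ≠ j' ∧ j ≠ j' then
          ‖ρ (basisCfg hd {i, j}) (basisCfg hd {i, j'})‖ -
            Real.sqrt ((swapQuad ρ j (basisCfg hd {i, j}) (basisCfg hd {i, j'})).re)
        else 0) -
      ((max (2 * (N - k - 1)) (N - k) : ℕ) : ℝ) *
        ∑ i : Fin N, ∑ j : Fin N,
          (if i ≠ j then (ρ (basisCfg hd {i, j}) (basisCfg hd {i, j})).re else 0)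
      ≤ 0 :=
  dicke_kSep_criterion_two_excitations_general hd k ρ hsep
end
end

section
/- Let |ψ⟩ ∈ H = H_1 ⊗ … ⊗ H_N be a unit vector that factorizes as |ψ⟩ = |ψ_A⟩ ⊗ |ψ_B⟩ across a bipartition {1,…,N} = A ∪ B (A, B disjoint and nonempty), and let i, j, j' be pairwise distinct indices with j ∈ A and j' ∈ B. Then for ρ = |ψ⟩⟨ψ| one has |⟨φ_{i,j}|ρ|φ_{i,j'}⟩| = sqrt( ⟨φ_i|ρ|φ_i⟩ · ⟨φ_{i,j,j'}|ρ|φ_{i,j,j'}⟩ ). -/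
open scoped BigOperators ComplexOrder

noncomputable section

/- Writing `ψ = f_A · f_B`, the products `ψ(x) ψ(y)` and `ψ(x_A y_B) ψ(y_A x_B)` are the same four
factors `f_A(x) f_B(y) f_A(y) f_B(x)`. With `x = φ_{i,j}` and `y = φ_{i,j'}`, the exchanged
configurations are `φ_{i,j,j'}` and `φ_i`, so `|ψ(φ_{i,j})| |ψ(φ_{i,j'})| = |ψ(φ_i)| |ψ(φ_{i,j,j'})|`,
which is the claimed identity for the entries of `|ψ⟩⟨ψ|`. -/

theorem mul_eq_mul_piecewise_of_eq_mul {ι R : Type*} {α : ι → Type*} [DecidableEq ι]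
    [CommMonoid R] {s : Finset ι} {ψ fA fB : ((i : ι) → α i) → R}
    (hfA : ∀ x y, (∀ i ∈ s, x i = y i) → fA x = fA y)
    (hfB : ∀ x y, (∀ i ∉ s, x i = y i) → fB x = fB y)
    (hψ : ∀ x, ψ x = fA x * fB x) (x y : (i : ι) → α i) :
    ψ x * ψ y = ψ (s.piecewise x y) * ψ (s.piecewise y x) := by
  have hAx : fA (s.piecewise x y) = fA x :=
    hfA _ _ fun i hi => Finset.piecewise_eq_of_mem _ _ _ hi
  have hAy : fA (s.piecewise y x) = fA y :=
    hfA _ _ fun i hi => Finset.piecewise_eq_of_mem _ _ _ hi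
  have hBy : fB (s.piecewise x y) = fB y :=
    hfB _ _ fun i hi => Finset.piecewise_eq_of_notMem _ _ _ hi
  have hBx : fB (s.piecewise y x) = fB x :=
    hfB _ _ fun i hi => Finset.piecewise_eq_of_notMem _ _ _ hi
  rw [hψ, hψ, hψ, hψ, hAx, hAy, hBx, hBy]
  ac_rfl

namespace Sep

variable {N : ℕ} {d : Fin N → ℕ}

theorem basisCfg_piecewise (hd : ∀ i, 2 ≤ d i) (A S T : Finset (Fin N)) :
    A.piecewise (basisCfg hd S) (basisCfg hd T) = basisCfg hd (S ∩ A ∪ T \ A) := by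
  funext k
  by_cases hk : k ∈ A <;> simp [basisCfg, hk]

theorem norm_outer_apply (ψ : ((i : Fin N) → Fin (d i)) → ℂ) (x y : (i : Fin N) → Fin (d i)) :
    ‖outer ψ x y‖ = ‖ψ x‖ * ‖ψ y‖ := by
  simp [outer, Matrix.vecMulVec_apply]

theorem re_outer_apply_self (ψ : ((i : Fin N) → Fin (d i)) → ℂ) (x : (i : Fin N) → Fin (d i)) :
    (outer ψ x x).re = ‖ψ x‖ ^ 2 := by
  simp [outer, Matrix.vecMulVec_apply, Complex.mul_conj, Complex.sq_norm]

theorem norm_outer_apply_eq_sqrt {ψ : ((i : Fin N) → Fin (d i)) → ℂ}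
    {x y u v : (i : Fin N) → Fin (d i)} (h : ψ x * ψ y = ψ u * ψ v) :
    ‖outer ψ x y‖ = √((outer ψ u u).re * (outer ψ v v).re) := by
  rw [re_outer_apply_self, re_outer_apply_self, ← mul_pow, Real.sqrt_sq (by positivity),
    norm_outer_apply, ← norm_mul, h, norm_mul]

end Sep

open Sep in
theorem abs_offdiag_eq_sqrt_of_bipartite_product_general
    {N : ℕ} {d : Fin N → ℕ} (hd : ∀ i, 2 ≤ d i)
    (ψ : ((i : Fin N) → Fin (d i)) → ℂ)
    (A : Finset (Fin N))
    (fA fB : ((i : Fin N) → Fin (d i)) → ℂ)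
    (hfA : ∀ x y, (∀ i ∈ A, x i = y i) → fA x = fA y)
    (hfB : ∀ x y, (∀ i ∉ A, x i = y i) → fB x = fB y)
    (hψ : ∀ x, ψ x = fA x * fB x)
    (i j j' : Fin N)
    (hjA : j ∈ A) (hj'B : j' ∉ A) :
    ‖(outer ψ) (basisCfg hd {i, j}) (basisCfg hd {i, j'})‖ =
      Real.sqrt (((outer ψ) (basisCfg hd {i}) (basisCfg hd {i})).re *
        ((outer ψ) (basisCfg hd {i, j, j'}) (basisCfg hd {i, j, j'})).re) := by
  have hxy : ({i, j} ∩ A ∪ {i, j'} \ A : Finset (Fin N)) = {i, j, j'} := by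
    ext k
    grind
  have hyx : ({i, j'} ∩ A ∪ {i, j} \ A : Finset (Fin N)) = {i} := by
    ext k
    grind
  rw [mul_comm (outer ψ _ _).re]
  apply norm_outer_apply_eq_sqrt
  rw [mul_eq_mul_piecewise_of_eq_mul hfA hfB hψ, basisCfg_piecewise, basisCfg_piecewise,
    hxy, hyx]

open Sep in
/-- If the unit vector `ψ` factorizes across a bipartition `A | Aᶜ` of `{1,…,N}`
(both parts nonempty), and `i, j, j'` are pairwise distinct with `j ∈ A` and
`j' ∈ Aᶜ`, then for `ρ = |ψ⟩⟨ψ|` one has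
`|⟨φ_{i,j}|ρ|φ_{i,j'}⟩| = sqrt(⟨φ_i|ρ|φ_i⟩ ⟨φ_{i,j,j'}|ρ|φ_{i,j,j'}⟩)`. -/
theorem abs_offdiag_eq_sqrt_of_bipartite_product
    {N : ℕ} {d : Fin N → ℕ} (hd : ∀ i, 2 ≤ d i)
    (ψ : ((i : Fin N) → Fin (d i)) → ℂ)
    (hunit : ∑ x, Complex.normSq (ψ x) = 1)
    (A : Finset (Fin N)) (hA : A.Nonempty) (hAc : Aᶜ.Nonempty)
    (fA fB : ((i : Fin N) → Fin (d i)) → ℂ)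
    (hfA : ∀ x y, (∀ i ∈ A, x i = y i) → fA x = fA y)
    (hfB : ∀ x y, (∀ i ∉ A, x i = y i) → fB x = fB y)
    (hψ : ∀ x, ψ x = fA x * fB x)
    (i j j' : Fin N) (hij : i ≠ j) (hij' : i ≠ j') (hjj' : j ≠ j')
    (hjA : j ∈ A) (hj'B : j' ∉ A) :
    ‖(outer ψ) (basisCfg hd {i, j}) (basisCfg hd {i, j'})‖ =
      Real.sqrt (((outer ψ) (basisCfg hd {i}) (basisCfg hd {i})).re *
        ((outer ψ) (basisCfg hd {i, j, j'}) (basisCfg hd {i, j, j'})).re) :=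
  abs_offdiag_eq_sqrt_of_bipartite_product_general hd ψ A fA fB hfA hfB hψ i j j' hjA hj'B
end
end

section
/- Let c ≥ 0 and let ρ = Σ_m p_m |ψ_m⟩⟨ψ_m| be a density matrix on H = H_1 ⊗ … ⊗ H_N, with p_m ≥ 0, Σ_m p_m = 1, and each |ψ_m⟩ a unit vector. Suppose every pure component ρ_m = |ψ_m⟩⟨ψ_m| satisfies Σ_{i,j,j' pairwise distinct} |⟨φ_{i,j}|ρ_m|φ_{i,j'}⟩| ≤ Σ_{i,j,j' pairwise distinct} sqrt( ⟨φ_i|ρ_m|φ_i⟩ · ⟨φ_{i,j,j'}|ρ_m|φ_{i,j,j'}⟩ ) + c · Σ_{i≠j} ⟨φ_{i,j}|ρ_m|φ_{i,j}⟩. Then ρ satisfies Σ_{i,j,j' pairwise distinct} |⟨φ_{i,j}|ρ|φ_{i,j'}⟩| ≤ Σ_{i,j,j' pairwise distinct} sqrt( ⟨φ_i|ρ|φ_i⟩ · ⟨φ_{i,j,j'}|ρ|φ_{i,j,j'}⟩ ) + c · Σ_{i≠j} ⟨φ_{i,j}|ρ|φ_{i,j}⟩. -/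
open scoped BigOperators ComplexOrder

noncomputable section

/-!
The left-hand side is a sum of moduli of matrix entries, hence convex in `ρ`; the term weighted
by `c` is linear in `ρ`; and `(x, y) ↦ √(x y)` is concave on the nonnegative quadrant (by
Cauchy–Schwarz, `∑ pₛ √(xₛ yₛ) ≤ √(∑ pₛ xₛ) √(∑ pₛ yₛ)`), so the first term of the right-hand side
is concave on matrices with nonnegative diagonal. Averaging the inequalities of the components
with the weights `pₛ` therefore gives the inequality for `ρ`.
-/

open Finset

lemma Real.sum_mul_sqrt_mul_le_sqrt_mul {ι : Type*} (s : Finset ι) {p x y : ι → ℝ}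
    (hp : ∀ i, 0 ≤ p i) (hx : ∀ i, 0 ≤ x i) (hy : ∀ i, 0 ≤ y i) :
    ∑ i ∈ s, p i * √(x i * y i) ≤ √((∑ i ∈ s, p i * x i) * ∑ i ∈ s, p i * y i) := by
  have hsplit : ∀ i, p i * √(x i * y i) = √(p i * x i) * √(p i * y i) := fun i => by
    rw [← Real.sqrt_mul (mul_nonneg (hp i) (hx i)), mul_mul_mul_comm,
      Real.sqrt_mul (mul_self_nonneg _), Real.sqrt_mul_self (hp i)]
  simp only [hsplit]
  rw [Real.sqrt_mul (sum_nonneg fun i _ => mul_nonneg (hp i) (hx i))]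
  exact Real.sum_sqrt_mul_sqrt_le s (fun i => mul_nonneg (hp i) (hx i))
    (fun i => mul_nonneg (hp i) (hy i))

lemma mul_sum_sum_sum_comm {R ι α β γ : Type*} [NonUnitalNonAssocSemiring R]
    [Fintype ι] [Fintype α] [Fintype β] [Fintype γ] (p : ι → R) (f : ι → α → β → γ → R) :
    ∑ s, p s * ∑ a, ∑ b, ∑ c, f s a b c = ∑ a, ∑ b, ∑ c, ∑ s, p s * f s a b c := by
  simp only [mul_sum]
  exact sum_comm.trans (sum_congr rfl fun a _ => sum_comm.trans (sum_congr rfl fun b _ => sum_comm))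

lemma mul_sum_sum_comm {R ι α β : Type*} [NonUnitalNonAssocSemiring R]
    [Fintype ι] [Fintype α] [Fintype β] (p : ι → R) (f : ι → α → β → R) :
    ∑ s, p s * ∑ a, ∑ b, f s a b = ∑ a, ∑ b, ∑ s, p s * f s a b := by
  simp only [mul_sum]
  exact sum_comm.trans (sum_congr rfl fun a _ => sum_comm)

namespace Matrix

variable {ι κ : Type*} [Fintype ι] (p : ι → ℝ) (M : ι → Matrix κ κ ℂ)

lemma norm_sum_smul_apply_le (hp : ∀ s, 0 ≤ p s) (a b : κ) :
    ‖(∑ s, (p s : ℂ) • M s) a b‖ ≤ ∑ s, p s * ‖M s a b‖ := by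
  simp only [sum_apply, smul_apply, smul_eq_mul]
  refine (norm_sum_le _ _).trans_eq (sum_congr rfl fun s _ => ?_)
  rw [norm_mul, Complex.norm_real, Real.norm_of_nonneg (hp s)]

lemma re_sum_smul_apply (a b : κ) :
    ((∑ s, (p s : ℂ) • M s) a b).re = ∑ s, p s * (M s a b).re := by
  simp [sum_apply, Complex.re_sum]

end Matrix

namespace Sep

variable {N : ℕ} {d : Fin N → ℕ}

lemma re_outer_apply_self_nonneg (ψ : ((i : Fin N) → Fin (d i)) → ℂ)
    (a : (i : Fin N) → Fin (d i)) : 0 ≤ (outer ψ a a).re := by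
  simpa [outer, Matrix.vecMulVec_apply, Complex.mul_conj] using Complex.normSq_nonneg (ψ a)

variable (hd : ∀ i, 2 ≤ d i)

def coherenceSum (ρ : Matrix ((i : Fin N) → Fin (d i)) ((i : Fin N) → Fin (d i)) ℂ) : ℝ :=
  ∑ i : Fin N, ∑ j : Fin N, ∑ j' : Fin N,
    if i ≠ j ∧ i ≠ j' ∧ j ≠ j' then ‖ρ (basisCfg hd {i, j}) (basisCfg hd {i, j'})‖ else 0

def sqrtPopulationSum (ρ : Matrix ((i : Fin N) → Fin (d i)) ((i : Fin N) → Fin (d i)) ℂ) : ℝ :=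
  ∑ i : Fin N, ∑ j : Fin N, ∑ j' : Fin N,
    if i ≠ j ∧ i ≠ j' ∧ j ≠ j' then
      √((ρ (basisCfg hd {i}) (basisCfg hd {i})).re *
        (ρ (basisCfg hd {i, j, j'}) (basisCfg hd {i, j, j'})).re)
    else 0

def pairPopulationSum (ρ : Matrix ((i : Fin N) → Fin (d i)) ((i : Fin N) → Fin (d i)) ℂ) : ℝ :=
  ∑ i : Fin N, ∑ j : Fin N,
    if i ≠ j then (ρ (basisCfg hd {i, j}) (basisCfg hd {i, j})).re else 0

variable {ι : Type*} [Fintype ι] (p : ι → ℝ)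
  (M : ι → Matrix ((i : Fin N) → Fin (d i)) ((i : Fin N) → Fin (d i)) ℂ)

lemma coherenceSum_sum_smul_le (hp : ∀ s, 0 ≤ p s) :
    coherenceSum hd (∑ s, (p s : ℂ) • M s) ≤ ∑ s, p s * coherenceSum hd (M s) := by
  simp only [coherenceSum, mul_sum_sum_sum_comm]
  gcongr with i _ j _ j' _
  split_ifs
  · exact Matrix.norm_sum_smul_apply_le p M hp _ _
  · simp

lemma sum_mul_sqrtPopulationSum_le (hp : ∀ s, 0 ≤ p s) (hM : ∀ s a, 0 ≤ (M s a a).re) :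
    ∑ s, p s * sqrtPopulationSum hd (M s) ≤ sqrtPopulationSum hd (∑ s, (p s : ℂ) • M s) := by
  simp only [sqrtPopulationSum, mul_sum_sum_sum_comm]
  gcongr with i _ j _ j' _
  split_ifs
  · rw [Matrix.re_sum_smul_apply, Matrix.re_sum_smul_apply]
    exact Real.sum_mul_sqrt_mul_le_sqrt_mul _ hp (fun s => hM s _) (fun s => hM s _)
  · simp

lemma pairPopulationSum_sum_smul :
    pairPopulationSum hd (∑ s, (p s : ℂ) • M s) = ∑ s, p s * pairPopulationSum hd (M s) := by
  simp only [pairPopulationSum, mul_sum_sum_comm]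
  refine sum_congr rfl fun i _ => sum_congr rfl fun j _ => ?_
  split_ifs
  · exact Matrix.re_sum_smul_apply p M _ _
  · simp

end Sep

open Sep in
theorem mixture_inequality_of_components_general
    {N : ℕ} {d : Fin N → ℕ} (hd : ∀ i, 2 ≤ d i)
    (c : ℝ)
    (n : ℕ) (p : Fin n → ℝ) (ψ : Fin n → ((i : Fin N) → Fin (d i)) → ℂ)
    (hp : ∀ s, 0 ≤ p s)
    (ρ : Matrix ((i : Fin N) → Fin (d i)) ((i : Fin N) → Fin (d i)) ℂ)
    (hρ : ρ = ∑ s, (p s : ℂ) • outer (ψ s))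
    (hcomp : ∀ s,
      (∑ i : Fin N, ∑ j : Fin N, ∑ j' : Fin N,
          if i ≠ j ∧ i ≠ j' ∧ j ≠ j' then
            ‖(outer (ψ s)) (basisCfg hd {i, j}) (basisCfg hd {i, j'})‖
          else 0) ≤
        (∑ i : Fin N, ∑ j : Fin N, ∑ j' : Fin N,
          if i ≠ j ∧ i ≠ j' ∧ j ≠ j' then
            Real.sqrt (((outer (ψ s)) (basisCfg hd {i}) (basisCfg hd {i})).re *
              ((outer (ψ s)) (basisCfg hd {i, j, j'}) (basisCfg hd {i, j, j'})).re)
          else 0) +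
          c * ∑ i : Fin N, ∑ j : Fin N,
            (if i ≠ j then ((outer (ψ s)) (basisCfg hd {i, j}) (basisCfg hd {i, j})).re
             else 0)) :
    (∑ i : Fin N, ∑ j : Fin N, ∑ j' : Fin N,
        if i ≠ j ∧ i ≠ j' ∧ j ≠ j' then
          ‖ρ (basisCfg hd {i, j}) (basisCfg hd {i, j'})‖
        else 0) ≤
      (∑ i : Fin N, ∑ j : Fin N, ∑ j' : Fin N,
        if i ≠ j ∧ i ≠ j' ∧ j ≠ j' then
          Real.sqrt ((ρ (basisCfg hd {i}) (basisCfg hd {i})).re *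
            (ρ (basisCfg hd {i, j, j'}) (basisCfg hd {i, j, j'})).re)
        else 0) +
        c * ∑ i : Fin N, ∑ j : Fin N,
          (if i ≠ j then (ρ (basisCfg hd {i, j}) (basisCfg hd {i, j})).re else 0) := by
  subst hρ
  calc coherenceSum hd (∑ s, (p s : ℂ) • outer (ψ s))
      ≤ ∑ s, p s * coherenceSum hd (outer (ψ s)) := coherenceSum_sum_smul_le hd p _ hp
    _ ≤ ∑ s, p s * (sqrtPopulationSum hd (outer (ψ s)) + c * pairPopulationSum hd (outer (ψ s))) :=
        sum_le_sum fun s _ => mul_le_mul_of_nonneg_left (hcomp s) (hp s)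
    _ = ∑ s, p s * sqrtPopulationSum hd (outer (ψ s)) +
          c * ∑ s, p s * pairPopulationSum hd (outer (ψ s)) := by
        rw [mul_sum]
        simp only [mul_add, sum_add_distrib, mul_left_comm c]
    _ ≤ sqrtPopulationSum hd (∑ s, (p s : ℂ) • outer (ψ s)) +
          c * pairPopulationSum hd (∑ s, (p s : ℂ) • outer (ψ s)) := by
        rw [pairPopulationSum_sum_smul]
        exact add_le_add_left (sum_mul_sqrtPopulationSum_le hd p _ hp
          fun s => re_outer_apply_self_nonneg (ψ s)) _

open Sep in
/-- Convexity step of the proof of Theorem 1: if every pure component of the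
mixture `ρ = Σ_m p_m |ψ_m⟩⟨ψ_m|` satisfies the inequality
`Σ_{i,j,j'} |⟨φ_{i,j}|ρ_m|φ_{i,j'}⟩| ≤
 Σ_{i,j,j'} sqrt(⟨φ_i|ρ_m|φ_i⟩⟨φ_{i,j,j'}|ρ_m|φ_{i,j,j'}⟩) + c Σ_{i≠j} ⟨φ_{i,j}|ρ_m|φ_{i,j}⟩`,
then so does `ρ`. -/
theorem mixture_inequality_of_components
    {N : ℕ} {d : Fin N → ℕ} (hd : ∀ i, 2 ≤ d i)
    (c : ℝ) (hc : 0 ≤ c)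
    (n : ℕ) (p : Fin n → ℝ) (ψ : Fin n → ((i : Fin N) → Fin (d i)) → ℂ)
    (hp : ∀ s, 0 ≤ p s) (hp1 : ∑ s, p s = 1)
    (hψ : ∀ s, ∑ x, Complex.normSq (ψ s x) = 1)
    (ρ : Matrix ((i : Fin N) → Fin (d i)) ((i : Fin N) → Fin (d i)) ℂ)
    (hρ : ρ = ∑ s, (p s : ℂ) • outer (ψ s))
    (hcomp : ∀ s,
      (∑ i : Fin N, ∑ j : Fin N, ∑ j' : Fin N,
          if i ≠ j ∧ i ≠ j' ∧ j ≠ j' then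
            ‖(outer (ψ s)) (basisCfg hd {i, j}) (basisCfg hd {i, j'})‖
          else 0) ≤
        (∑ i : Fin N, ∑ j : Fin N, ∑ j' : Fin N,
          if i ≠ j ∧ i ≠ j' ∧ j ≠ j' then
            Real.sqrt (((outer (ψ s)) (basisCfg hd {i}) (basisCfg hd {i})).re *
              ((outer (ψ s)) (basisCfg hd {i, j, j'}) (basisCfg hd {i, j, j'})).re)
          else 0) +
          c * ∑ i : Fin N, ∑ j : Fin N,
            (if i ≠ j then ((outer (ψ s)) (basisCfg hd {i, j}) (basisCfg hd {i, j})).re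
             else 0)) :
    (∑ i : Fin N, ∑ j : Fin N, ∑ j' : Fin N,
        if i ≠ j ∧ i ≠ j' ∧ j ≠ j' then
          ‖ρ (basisCfg hd {i, j}) (basisCfg hd {i, j'})‖
        else 0) ≤
      (∑ i : Fin N, ∑ j : Fin N, ∑ j' : Fin N,
        if i ≠ j ∧ i ≠ j' ∧ j ≠ j' then
          Real.sqrt ((ρ (basisCfg hd {i}) (basisCfg hd {i})).re *
            (ρ (basisCfg hd {i, j, j'}) (basisCfg hd {i, j, j'})).re)
        else 0) +
        c * ∑ i : Fin N, ∑ j : Fin N,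
          (if i ≠ j then (ρ (basisCfg hd {i, j}) (basisCfg hd {i, j})).re else 0) :=
  mixture_inequality_of_components_general hd c n p ψ hp ρ hρ hcomp
end
end

section
/- Let N ≥ 4, 2 ≤ k ≤ N, N_k := max{2(N−k−1), N−k}, and consider the N-qubit state ρ^{(D_2^N)} = a |D_2^N⟩⟨D_2^N| + (1−a) I_N / 2^N with 0 ≤ a ≤ 1. If a > ( 2 C(N,2)(N−2) + N_k C(N,2) ) / ( 2 C(N,2)(N−2) + N_k C(N,2) − 2^N N_k + 2^{N+1}(N−2) ), then ρ^{(D_2^N)} is k-nonseparable (not k-separable). -/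
/-!
Write `ψ_S` and `ρ_{S,T}` for the amplitudes and matrix entries at the basis states with ones
exactly on `S` (and `T`). Every `k`-separable `ρ` satisfies, summed over ordered triples `(m, i, j)` of distinct
qubits,
`∑ |ρ_{mi,mj}| ≤ ∑ √(ρ_{m,m} ρ_{mij,mij}) + N_k/2 ∑_{m ≠ i} ρ_{mi,mi}`.
By the triangle and Cauchy–Schwarz inequalities it suffices to prove this for a `k`-separable pure
state `ψ`. If `i` and `j` lie in different blocks of the partition of `ψ`, then
`ψ_{mi} ψ_{mj} = ψ_m ψ_{mij}`. The remaining terms are bounded by AM–GM by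
`∑ c(m,i) |ψ_{mi}|²`, where `c(m,i)` counts the qubits other than `m, i` in the block of `i`.
Since the partition has `k` blocks, `c(m,i) + c(i,m) ≤ N_k`. For the noisy Dicke state the
inequality reads `2(N-2) a ≤ (2C(N-2) + N_k C)(1-a)/2^N + N_k a` with `C = C(N,2)`, and this fails
exactly above the threshold.
-/

open scoped BigOperators

noncomputable section

namespace Qubits

/-- The outer product `|ψ⟩⟨ψ|` of an `N`-qubit state vector, as a matrix in the
computational basis (indexed by configurations `Fin N → Fin 2`). -/
def outer {N : ℕ} (ψ : (Fin N → Fin 2) → ℂ) :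
    Matrix (Fin N → Fin 2) (Fin N → Fin 2) ℂ :=
  Matrix.vecMulVec ψ (star ψ)

/-- A pure `N`-qubit state is `k`-separable if `{1,…,N}` can be partitioned into `k`
(pairwise disjoint, nonempty) parts — the fibers of a surjection `P : Fin N → Fin k` —
such that `ψ` factorizes as a product of `k` functions, the `l`-th of which depends
only on the qubits in part `l`. -/
def kSepPure {N : ℕ} (k : ℕ) (ψ : (Fin N → Fin 2) → ℂ) : Prop :=
  ∃ P : Fin N → Fin k, Function.Surjective P ∧
    ∃ f : Fin k → ((Fin N → Fin 2) → ℂ),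
      (∀ l x y, (∀ i, P i = l → x i = y i) → f l x = f l y) ∧
      ∀ x, ψ x = ∏ l, f l x

/-- An `N`-qubit density matrix is `k`-separable if it is a convex combination of
projectors onto `k`-separable pure (unit) states, possibly separable with respect
to different partitions. -/
def kSep {N : ℕ} (k : ℕ) (ρ : Matrix (Fin N → Fin 2) (Fin N → Fin 2) ℂ) : Prop :=
  ∃ (n : ℕ) (p : Fin n → ℝ) (ψ : Fin n → (Fin N → Fin 2) → ℂ),
    (∀ s, 0 ≤ p s) ∧ (∑ s, p s = 1) ∧
    (∀ s, ∑ x, Complex.normSq (ψ s x) = 1) ∧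
    (∀ s, kSepPure k (ψ s)) ∧
    ρ = ∑ s, (p s : ℂ) • outer (ψ s)

/-- The `N`-qubit Dicke state with `m` excitations,
`|D_m^N⟩ = C(N,m)^{-1/2} Σ_{|S| = m} |e_S⟩`, as a vector of computational-basis
coefficients. -/
def dicke (N m : ℕ) : (Fin N → Fin 2) → ℂ :=
  fun x => if (Finset.univ.filter fun i => x i = 1).card = m
    then (((Real.sqrt (N.choose m))⁻¹ : ℝ) : ℂ) else 0

end Qubits

open Finset Function

section Involution

variable {ι : Type*} {s : Finset ι} {σ : ι → ι}

lemma Finset.sum_comp_of_involution {M : Type*} [AddCommMonoid M] (hσ : ∀ t ∈ s, σ t ∈ s)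
    (hσσ : ∀ t ∈ s, σ (σ t) = t) (g : ι → M) :
    ∑ t ∈ s, g (σ t) = ∑ t ∈ s, g t :=
  sum_nbij' σ σ hσ hσ hσσ hσσ fun _ _ => rfl

lemma Finset.sum_mul_comp_le_sum_sq (hσ : ∀ t ∈ s, σ t ∈ s) (hσσ : ∀ t ∈ s, σ (σ t) = t)
    (f : ι → ℝ) :
    ∑ t ∈ s, f t * f (σ t) ≤ ∑ t ∈ s, f t ^ 2 := by
  calc ∑ t ∈ s, f t * f (σ t) ≤ ∑ t ∈ s, (f t ^ 2 + f (σ t) ^ 2) / 2 :=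
        sum_le_sum fun t _ => by nlinarith [sq_nonneg (f t - f (σ t))]
    _ = ∑ t ∈ s, f t ^ 2 := by
        rw [← sum_div, sum_add_distrib, sum_comp_of_involution hσ hσσ fun t => f t ^ 2]
        ring

lemma Finset.sum_mul_le_half_mul_sum (hσ : ∀ t ∈ s, σ t ∈ s) (hσσ : ∀ t ∈ s, σ (σ t) = t)
    {c w : ι → ℝ} {K : ℝ} (hw0 : ∀ t ∈ s, 0 ≤ w t) (hw : ∀ t ∈ s, w (σ t) = w t)
    (hc : ∀ t ∈ s, c t + c (σ t) ≤ K) :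
    ∑ t ∈ s, c t * w t ≤ K / 2 * ∑ t ∈ s, w t := by
  have hswap : ∑ t ∈ s, c (σ t) * w t = ∑ t ∈ s, c t * w t := by
    rw [← sum_comp_of_involution hσ hσσ fun t => c t * w t]
    exact sum_congr rfl fun t ht => by rw [hw t ht]
  have : 2 * ∑ t ∈ s, c t * w t ≤ K * ∑ t ∈ s, w t :=
    calc 2 * ∑ t ∈ s, c t * w t = ∑ t ∈ s, (c t + c (σ t)) * w t := by
          simp only [add_mul, sum_add_distrib, hswap]; ring
      _ ≤ ∑ t ∈ s, K * w t := sum_le_sum fun t ht => by gcongr; exacts [hw0 t ht, hc t ht]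
      _ = K * ∑ t ∈ s, w t := (mul_sum _ _ _).symm
  linarith

end Involution

lemma Real.sum_mul_mul_le_sqrt_mul_sqrt {ι : Type*} (s : Finset ι) {p : ι → ℝ}
    (hp : ∀ t, 0 ≤ p t) (f g : ι → ℝ) :
    ∑ t ∈ s, p t * (f t * g t) ≤ √(∑ t ∈ s, p t * f t ^ 2) * √(∑ t ∈ s, p t * g t ^ 2) := by
  have h := Real.sum_mul_le_sqrt_mul_sqrt s (fun t => √(p t) * f t) (fun t => √(p t) * g t)
  refine (sum_congr rfl fun t _ => ?_).trans_le
    (by simpa only [mul_pow, Real.sq_sqrt (hp _)] using h)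
  rw [mul_mul_mul_comm, Real.mul_self_sqrt (hp t)]

section Fibers

variable {ι κ : Type*} [Fintype ι] [Fintype κ] [DecidableEq κ] {P : ι → κ}

lemma Function.Surjective.card_filter_mem_add_card_le (hP : Surjective P) (L : Finset κ) :
    #{j | P j ∈ L} + Fintype.card κ ≤ Fintype.card ι + #L := by
  have hcompl : Lᶜ ⊆ image P {j | P j ∉ L} := fun l hl => by
    obtain ⟨j, rfl⟩ := hP l
    exact mem_image.mpr ⟨j, by simpa using hl, rfl⟩
  have := (card_le_card hcompl).trans card_image_le
  have := card_filter_add_card_filter_not (s := univ) (fun j => P j ∈ L)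
  rw [card_compl] at *
  have := card_le_univ L
  simp only [card_univ] at *
  omega

lemma Function.Surjective.card_sameFiber_add_le [DecidableEq ι] (hP : Surjective P) {m i : ι}
    (hmi : m ≠ i) :
    #{j ∈ {m, i}ᶜ | P j = P i} + #{j ∈ {i, m}ᶜ | P j = P m} ≤
      max (2 * (Fintype.card ι - Fintype.card κ - 1)) (Fintype.card ι - Fintype.card κ) := by
  have hsdiff (L : Finset κ) (hm : P m ∈ L) (hi : P i ∈ L) :
      #{j ∈ {m, i}ᶜ | P j ∈ L} + 2 = #{j | P j ∈ L} := by
    rw [← card_pair hmi, ← card_union_of_disjoint]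
    · congr 1; ext j; by_cases j = m <;> by_cases j = i <;> simp_all
    · rw [disjoint_left]; intro j; simp +contextual
  rw [pair_comm i m]
  by_cases h : P m = P i
  · have := hsdiff {P i} (by simpa using h) (by simp)
    have := hP.card_filter_mem_add_card_le {P i}
    simp only [mem_singleton, card_singleton, h] at *
    omega
  · have := hsdiff {P i, P m} (by simp) (by simp)
    have := hP.card_filter_mem_add_card_le {P i, P m}
    have hAB : Disjoint (α := Finset ι) {j ∈ {m, i}ᶜ | P j = P i} {j ∈ {m, i}ᶜ | P j = P m} :=
      disjoint_filter.2 fun j _ (hi : P j = P i) (hm : P j = P m) => h (hm ▸ hi)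
    rw [← card_union_of_disjoint hAB, ← filter_or]
    simp only [mem_insert, mem_singleton, card_pair (Ne.symm h)] at *
    omega

end Fibers

lemma mul_update_eq_of_factorization {ι κ α M : Type*} [DecidableEq ι] [Fintype κ]
    [CommMonoid M] {P : ι → κ} {f : κ → (ι → α) → M}
    (hf : ∀ l x y, (∀ i, P i = l → x i = y i) → f l x = f l y)
    {ψ : (ι → α) → M} (hψ : ∀ x, ψ x = ∏ l, f l x) {i j : ι} (hij : P i ≠ P j)
    (x : ι → α) (a b : α) :
    ψ (update x i a) * ψ (update x j b) = ψ x * ψ (update (update x i a) j b) := by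
  simp only [hψ, ← prod_mul_distrib]
  refine prod_congr rfl fun l _ => ?_
  by_cases hl : P j = l
  · have hi : ∀ t, P t = l → t ≠ i := fun t ht hti => hij (hti ▸ ht.trans hl.symm)
    rw [hf l (update x i a) x fun t ht => update_of_ne (hi t ht) _ _,
      hf l (update x j b) (update (update x i a) j b) fun t ht => by
        by_cases htj : t = j
        · simp [htj]
        · simp [htj, hi t ht]]
  · have hj : ∀ t, P t = l → t ≠ j := fun t ht htj => hl (htj ▸ ht)
    rw [hf l (update x j b) x fun t ht => update_of_ne (hj t ht) _ _,
      hf l (update x i a) (update (update x i a) j b) fun t ht =>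
        (update_of_ne (hj t ht) _ _).symm,
      mul_comm]

namespace Qubits

variable {N : ℕ}

def onesAt (S : Finset (Fin N)) : Fin N → Fin 2 := fun t => if t ∈ S then 1 else 0

lemma update_onesAt (S : Finset (Fin N)) (i : Fin N) :
    update (onesAt S) i 1 = onesAt (insert i S) := by
  ext t
  by_cases h : t = i <;> simp [onesAt, h]

lemma filter_onesAt_eq_one (S : Finset (Fin N)) :
    ({t | onesAt S t = 1} : Finset (Fin N)) = S := by
  ext t
  by_cases h : t ∈ S <;> simp [onesAt, h]

lemma onesAt_injective : Injective (onesAt (N := N)) := fun S T h => by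
  rw [← filter_onesAt_eq_one S, h, filter_onesAt_eq_one]

lemma dicke_onesAt (m : ℕ) (S : Finset (Fin N)) :
    dicke N m (onesAt S) = if #S = m then (((√(N.choose m))⁻¹ : ℝ) : ℂ) else 0 := by
  simp only [dicke, filter_onesAt_eq_one]

def triples (N : ℕ) : Finset ((Fin N × Fin N) × Fin N) :=
  {t | t.1 ∈ (univ : Finset (Fin N)).offDiag ∧ t.2 ∈ ({t.1.1, t.1.2}ᶜ : Finset (Fin N))}

lemma sum_triples {M : Type*} [AddCommMonoid M] (f : (Fin N × Fin N) × Fin N → M) :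
    ∑ t ∈ triples N, f t = ∑ q ∈ univ.offDiag, ∑ j ∈ {q.1, q.2}ᶜ, f (q, j) :=
  sum_finset_product _ _ _ fun t => by simp [triples]

lemma mem_triples {t : (Fin N × Fin N) × Fin N} :
    t ∈ triples N ↔ t.1.1 ≠ t.1.2 ∧ t.2 ≠ t.1.1 ∧ t.2 ≠ t.1.2 := by
  simp [triples]

lemma card_triples : #(triples N) = #(univ : Finset (Fin N)).offDiag * (N - 2) := by
  rw [card_eq_sum_ones, sum_triples, sum_const_nat fun q hq => ?_]
  rw [← card_eq_sum_ones, card_compl, card_pair (mem_offDiag.1 hq).2.2, Fintype.card_fin]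

lemma sum_triples_sameFiber_le {k : ℕ} {P : Fin N → Fin k} (hP : Surjective P)
    {x : Fin N × Fin N → ℝ} (hx : ∀ q, x q.swap = x q) :
    ∑ t ∈ triples N with P t.2 = P t.1.2, x t.1 * x (t.1.1, t.2) ≤
      (max (2 * (N - k - 1)) (N - k) : ℕ) / 2 * ∑ q ∈ univ.offDiag, x q ^ 2 := by
  let c (q : Fin N × Fin N) : ℝ := #{j ∈ {q.1, q.2}ᶜ | P j = P q.2}
  calc ∑ t ∈ triples N with P t.2 = P t.1.2, x t.1 * x (t.1.1, t.2)
      ≤ ∑ t ∈ triples N with P t.2 = P t.1.2, x t.1 ^ 2 :=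
        sum_mul_comp_le_sum_sq (σ := fun t => ((t.1.1, t.2), t.1.2))
          (fun t ht => by simp_all [mem_filter, mem_triples, eq_comm]) (fun _ _ => rfl) _
    _ = ∑ q ∈ univ.offDiag, c q * x q ^ 2 := by
        rw [sum_filter, sum_triples]
        refine sum_congr rfl fun q _ => ?_
        dsimp only
        rw [← sum_filter, sum_const, nsmul_eq_mul]
    _ ≤ _ := by
        refine sum_mul_le_half_mul_sum (σ := Prod.swap) (fun q hq => by simpa [eq_comm] using hq)
          (fun _ _ => rfl) (fun q _ => sq_nonneg _) (fun q _ => by rw [hx]) fun q hq => ?_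
        have := hP.card_sameFiber_add_le (mem_offDiag.1 hq).2.2
        simp only [Fintype.card_fin] at this
        simp only [c, Prod.fst_swap, Prod.snd_swap]
        exact_mod_cast this

lemma kSepPure.sum_triples_le {k : ℕ} {ψ : (Fin N → Fin 2) → ℂ} (hψ : kSepPure k ψ) :
    ∑ t ∈ triples N, ‖ψ (onesAt {t.1.1, t.1.2})‖ * ‖ψ (onesAt {t.1.1, t.2})‖ ≤
      ∑ t ∈ triples N, ‖ψ (onesAt {t.1.1})‖ * ‖ψ (onesAt {t.1.1, t.1.2, t.2})‖ +
      (max (2 * (N - k - 1)) (N - k) : ℕ) / 2 *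
        ∑ q ∈ univ.offDiag, ‖ψ (onesAt {q.1, q.2})‖ ^ 2 := by
  obtain ⟨P, hP, f, hf, hprod⟩ := hψ
  rw [← sum_filter_add_sum_filter_not (triples N) (fun t => P t.2 = P t.1.2), add_comm]
  gcongr ?_ + ?_
  · refine (sum_congr rfl fun t ht => ?_).trans_le <| sum_le_sum_of_subset_of_nonneg
      (filter_subset _ _) fun _ _ _ => by positivity
    obtain ⟨-, hij⟩ := mem_filter.1 ht
    obtain ⟨⟨m, i⟩, j⟩ := t
    have := mul_update_eq_of_factorization hf hprod (Ne.symm hij) (onesAt {m}) 1 1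
    simp only [update_onesAt] at this
    rw [← norm_mul, ← norm_mul, pair_comm m i, pair_comm m j,
      show ({m, i, j} : Finset (Fin N)) = {j, i, m} by ext; simp; tauto, this]
  · exact sum_triples_sameFiber_le hP (x := fun q => ‖ψ (onesAt {q.1, q.2})‖) fun q => by
      simp only [Prod.fst_swap, Prod.snd_swap, pair_comm]


variable {n : ℕ}

lemma re_sum_smul_outer_apply_self (p : Fin n → ℝ) (ψ : Fin n → (Fin N → Fin 2) → ℂ)
    (x : Fin N → Fin 2) :
    ((∑ s, (p s : ℂ) • outer (ψ s)) x x).re = ∑ s, p s * ‖ψ s x‖ ^ 2 := by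
  simp [Matrix.sum_apply, outer, Matrix.vecMulVec_apply, Complex.re_sum, Complex.mul_conj',
    ← Complex.ofReal_pow]

lemma norm_sum_smul_outer_apply_le {p : Fin n → ℝ} (hp : ∀ s, 0 ≤ p s)
    (ψ : Fin n → (Fin N → Fin 2) → ℂ) (x y : Fin N → Fin 2) :
    ‖(∑ s, (p s : ℂ) • outer (ψ s)) x y‖ ≤ ∑ s, p s * (‖ψ s x‖ * ‖ψ s y‖) := by
  rw [Matrix.sum_apply]
  refine (norm_sum_le _ _).trans_eq (sum_congr rfl fun s _ => ?_)
  simp [outer, Matrix.vecMulVec_apply, Complex.norm_real, abs_of_nonneg (hp s)]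

theorem kSep.sum_triples_le {k : ℕ} {ρ : Matrix (Fin N → Fin 2) (Fin N → Fin 2) ℂ}
    (h : kSep k ρ) :
    ∑ t ∈ triples N, ‖ρ (onesAt {t.1.1, t.1.2}) (onesAt {t.1.1, t.2})‖ ≤
      ∑ t ∈ triples N, √(ρ (onesAt {t.1.1}) (onesAt {t.1.1})).re *
        √(ρ (onesAt {t.1.1, t.1.2, t.2}) (onesAt {t.1.1, t.1.2, t.2})).re +
      (max (2 * (N - k - 1)) (N - k) : ℕ) / 2 *
        ∑ q ∈ univ.offDiag, (ρ (onesAt {q.1, q.2}) (onesAt {q.1, q.2})).re := by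
  obtain ⟨n, p, ψ, hp, -, -, hψ, rfl⟩ := h
  simp only [re_sum_smul_outer_apply_self]
  calc _ ≤ ∑ t ∈ triples N, ∑ s, p s *
          (‖ψ s (onesAt {t.1.1, t.1.2})‖ * ‖ψ s (onesAt {t.1.1, t.2})‖) :=
        sum_le_sum fun t _ => norm_sum_smul_outer_apply_le hp ψ _ _
    _ = ∑ s, p s * ∑ t ∈ triples N,
          ‖ψ s (onesAt {t.1.1, t.1.2})‖ * ‖ψ s (onesAt {t.1.1, t.2})‖ := by
        rw [sum_comm]; simp only [mul_sum]
    _ ≤ ∑ s, p s * (∑ t ∈ triples N,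
          ‖ψ s (onesAt {t.1.1})‖ * ‖ψ s (onesAt {t.1.1, t.1.2, t.2})‖ +
          (max (2 * (N - k - 1)) (N - k) : ℕ) / 2 *
            ∑ q ∈ univ.offDiag, ‖ψ s (onesAt {q.1, q.2})‖ ^ 2) :=
        sum_le_sum fun s _ => mul_le_mul_of_nonneg_left (hψ s).sum_triples_le (hp s)
    _ = ∑ t ∈ triples N, ∑ s, p s *
          (‖ψ s (onesAt {t.1.1})‖ * ‖ψ s (onesAt {t.1.1, t.1.2, t.2})‖) +
        (max (2 * (N - k - 1)) (N - k) : ℕ) / 2 *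
          ∑ q ∈ univ.offDiag, ∑ s, p s * ‖ψ s (onesAt {q.1, q.2})‖ ^ 2 := by
        simp only [mul_add, sum_add_distrib, mul_sum, mul_left_comm (p _)]
        rw [sum_comm, sum_comm (s := univ)]
    _ ≤ _ := by
        gcongr with t
        exact Real.sum_mul_mul_le_sqrt_mul_sqrt _ hp _ _


lemma noisyDicke_onesAt_apply (a c : ℝ) (S T : Finset (Fin N)) :
    ((a : ℂ) • outer (dicke N 2) + (c : ℂ) • (1 : Matrix (Fin N → Fin 2) (Fin N → Fin 2) ℂ))
        (onesAt S) (onesAt T) =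
      (((if #S = 2 ∧ #T = 2 then a / N.choose 2 else 0) + if S = T then c else 0 : ℝ) : ℂ) := by
  have hr : ((√(N.choose 2 : ℝ) : ℝ) : ℂ)⁻¹ * ((√(N.choose 2 : ℝ) : ℝ) : ℂ)⁻¹ =
      ((N.choose 2 : ℝ) : ℂ)⁻¹ := by
    rw [← mul_inv, ← Complex.ofReal_mul, Real.mul_self_sqrt (Nat.cast_nonneg _)]
  simp only [Matrix.add_apply, Matrix.smul_apply, outer, Matrix.vecMulVec_apply, Pi.star_apply,
    dicke_onesAt, Matrix.one_apply, onesAt_injective.eq_iff, smul_eq_mul]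
  split_ifs <;> simp_all [div_eq_mul_inv]

theorem kSep.noisyDicke_le {k : ℕ} (hN : 2 ≤ N) {a : ℝ} (ha0 : 0 ≤ a) (ha1 : a ≤ 1)
    (h : kSep k ((a : ℂ) • outer (dicke N 2) +
      (((1 - a) / 2 ^ N : ℝ) : ℂ) • (1 : Matrix (Fin N → Fin 2) (Fin N → Fin 2) ℂ))) :
    2 * ((N : ℝ) - 2) * a ≤
      (2 * (N.choose 2 : ℝ) * ((N : ℝ) - 2) + (max (2 * (N - k - 1)) (N - k) : ℕ) * N.choose 2) *
        ((1 - a) / 2 ^ N) + (max (2 * (N - k - 1)) (N - k) : ℕ) * a := by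
  set c := (1 - a) / 2 ^ N
  set ρ : Matrix (Fin N → Fin 2) (Fin N → Fin 2) ℂ :=
    (a : ℂ) • outer (dicke N 2) + (c : ℂ) • 1 with hρ
  have hc : 0 ≤ c := div_nonneg (by linarith) (by positivity)
  have hC : (0 : ℝ) < N.choose 2 := by exact_mod_cast Nat.choose_pos hN
  have hoff : ∀ t ∈ triples N,
      ‖ρ (onesAt {t.1.1, t.1.2}) (onesAt {t.1.1, t.2})‖ = a / N.choose 2 := by
    intro t ht
    obtain ⟨hmi, hjm, hji⟩ := mem_triples.1 ht
    have hne : ({t.1.1, t.1.2} : Finset (Fin N)) ≠ {t.1.1, t.2} := fun h => hji.symm <| by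
      simpa [hmi.symm] using congrArg (t.1.2 ∈ ·) h
    rw [hρ, noisyDicke_onesAt_apply]
    simp [card_pair hmi, card_pair hjm.symm, hne, abs_of_nonneg ha0]
  have hdiag : ∀ t ∈ triples N, √(ρ (onesAt {t.1.1}) (onesAt {t.1.1})).re *
      √(ρ (onesAt {t.1.1, t.1.2, t.2}) (onesAt {t.1.1, t.1.2, t.2})).re = c := by
    intro t ht
    obtain ⟨hmi, hjm, hji⟩ := mem_triples.1 ht
    rw [hρ, noisyDicke_onesAt_apply, noisyDicke_onesAt_apply]
    simp [card_pair hji.symm, hmi, hjm.symm, Real.mul_self_sqrt hc]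
  have hpair : ∀ q ∈ (univ : Finset (Fin N)).offDiag,
      (ρ (onesAt {q.1, q.2}) (onesAt {q.1, q.2})).re = a / N.choose 2 + c := by
    intro q hq
    rw [hρ, noisyDicke_onesAt_apply]
    simp [card_pair (mem_offDiag.1 hq).2.2]
  have key := h.sum_triples_le
  rw [sum_congr rfl hoff, sum_congr rfl hdiag, sum_congr rfl hpair] at key
  have hpairs : (#(univ : Finset (Fin N)).offDiag : ℝ) = 2 * N.choose 2 := by
    rw [offDiag_card, card_univ, Fintype.card_fin, Nat.cast_sub (Nat.le_mul_self N),
      Nat.cast_choose_two]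
    push_cast
    ring
  simp only [sum_const, nsmul_eq_mul, card_triples, Nat.cast_mul, hpairs,
    Nat.cast_sub hN] at key
  have hx : (N.choose 2 : ℝ) * (a / N.choose 2) = a := mul_div_cancel₀ _ hC.ne'
  rw [← hx]
  linarith

end Qubits

open Qubits in
theorem dicke2_noise_not_kSep_general
    (N k : ℕ) (hN : 4 ≤ N) (hk2 : 2 ≤ k)
    (Nk : ℕ) (hNk : Nk = max (2 * (N - k - 1)) (N - k))
    (a : ℝ) (ha0 : 0 ≤ a) (ha1 : a ≤ 1)
    (ha : a > (2 * (N.choose 2 : ℝ) * ((N : ℝ) - 2) + (Nk : ℝ) * (N.choose 2 : ℝ)) /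
        (2 * (N.choose 2 : ℝ) * ((N : ℝ) - 2) + (Nk : ℝ) * (N.choose 2 : ℝ) -
          2 ^ N * (Nk : ℝ) + 2 ^ (N + 1) * ((N : ℝ) - 2))) :
    ¬ kSep k ((a : ℂ) • outer (dicke N 2) +
        (((1 - a) / 2 ^ N : ℝ) : ℂ) • (1 : Matrix (Fin N → Fin 2) (Fin N → Fin 2) ℂ)) := by
  intro h
  have hbound := h.noisyDicke_le (by omega) ha0 ha1
  rw [← hNk] at hbound
  have hC : (0 : ℝ) < N.choose 2 := by exact_mod_cast Nat.choose_pos (by omega : 2 ≤ N)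
  have hNk_le : (Nk : ℝ) + 6 ≤ 2 * N := by exact_mod_cast (by omega : Nk + 6 ≤ 2 * N)
  have hN4 : (4 : ℝ) ≤ N := by exact_mod_cast hN
  have h2N : (0 : ℝ) < 2 ^ N := by positivity
  have hden : 0 < 2 * (N.choose 2 : ℝ) * ((N : ℝ) - 2) + (Nk : ℝ) * (N.choose 2 : ℝ) -
      2 ^ N * (Nk : ℝ) + 2 ^ (N + 1) * ((N : ℝ) - 2) := by
    rw [pow_succ]
    linarith [mul_pos hC (by linarith : (0 : ℝ) < N - 2), mul_nonneg (Nat.cast_nonneg Nk) hC.le,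
      mul_pos h2N (by linarith : (0 : ℝ) < 2 * (N - 2) - Nk)]
  rw [gt_iff_lt, div_lt_iff₀ hden, pow_succ] at ha
  rw [mul_div_assoc', ← sub_le_iff_le_add, le_div_iff₀ h2N] at hbound
  linarith

open Qubits in
/-- If `a` exceeds the stated threshold then the mixture of the `N`-qubit Dicke
state `|D_2^N⟩` with white noise is `k`-nonseparable, where
`N_k = max{2(N−k−1), N−k}` and `C = C(N,2)`. -/
theorem dicke2_noise_not_kSep
    (N k : ℕ) (hN : 4 ≤ N) (hk2 : 2 ≤ k) (hkN : k ≤ N)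
    (Nk : ℕ) (hNk : Nk = max (2 * (N - k - 1)) (N - k))
    (a : ℝ) (ha0 : 0 ≤ a) (ha1 : a ≤ 1)
    (ha : a > (2 * (N.choose 2 : ℝ) * ((N : ℝ) - 2) + (Nk : ℝ) * (N.choose 2 : ℝ)) /
        (2 * (N.choose 2 : ℝ) * ((N : ℝ) - 2) + (Nk : ℝ) * (N.choose 2 : ℝ) -
          2 ^ N * (Nk : ℝ) + 2 ^ (N + 1) * ((N : ℝ) - 2))) :
    ¬ kSep k ((a : ℂ) • outer (dicke N 2) +
        (((1 - a) / 2 ^ N : ℝ) : ℂ) • (1 : Matrix (Fin N → Fin 2) (Fin N → Fin 2) ℂ)) :=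
  dicke2_noise_not_kSep_general N k hN hk2 Nk hNk a ha0 ha1 ha
end
end

section
/- Consider the four-qubit state ρ^{(D_2^4)} = a |D_2^4⟩⟨D_2^4| + (1−a) I_4 / 16 with 0 ≤ a ≤ 1, where |D_2^4⟩ = 6^{−1/2}(|1100⟩+|1010⟩+|1001⟩+|0110⟩+|0011⟩+|0101⟩). If a > 5/13, then ρ^{(D_2^4)} is not 3-separable. -/
/-!
For `D = |D_2^4⟩` the fidelity `⟨D|ρ|D⟩` of `ρ = a |D⟩⟨D| + (1 - a) I / 16` is `a + (1 - a) / 16`,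
while on a 3-separable state it is at most the largest squared overlap of `D` with a 3-separable
pure state. Up to a permutation of the qubits, which fixes `D`, such a pure state is `g ⊗ h ⊗ u`
with `g` on the first two qubits; Cauchy–Schwarz in `g` and an elementary estimate in `h`, `u`
bound the overlap by `(1/6) (5/2) = 5/12`. Hence `a + (1 - a) / 16 ≤ 5/12`, i.e. `a ≤ 17/45 < 5/13`.
-/

open scoped BigOperators

noncomputable section

namespace Qubits

open Matrix Complex

variable {N : ℕ}

lemma star_dotProduct_outer_mulVec (φ ψ : (Fin N → Fin 2) → ℂ) :
    star φ ⬝ᵥ (outer ψ *ᵥ φ) = (normSq (star φ ⬝ᵥ ψ) : ℂ) := by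
  rw [outer, dotProduct_mulVec, vecMul_vecMulVec, smul_dotProduct, smul_eq_mul, star_dotProduct ψ,
    RCLike.star_def, mul_conj]

lemma re_star_dotProduct_mulVec_le_of_kSep {k : ℕ} (φ : (Fin N → Fin 2) → ℂ) {c : ℝ}
    (hpure : ∀ ψ, ∑ x, normSq (ψ x) = 1 → kSepPure k ψ → normSq (star φ ⬝ᵥ ψ) ≤ c)
    {ρ : Matrix (Fin N → Fin 2) (Fin N → Fin 2) ℂ} (hρ : kSep k ρ) :
    (star φ ⬝ᵥ (ρ *ᵥ φ)).re ≤ c := by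
  obtain ⟨n, p, ψ, hp, hpsum, hnorm, hsep, rfl⟩ := hρ
  simp only [sum_mulVec, dotProduct_sum, smul_mulVec, dotProduct_smul, star_dotProduct_outer_mulVec,
    smul_eq_mul, re_sum, ← ofReal_mul, ofReal_re]
  calc ∑ s, p s * normSq (star φ ⬝ᵥ ψ s) ≤ ∑ s, p s * c :=
        Finset.sum_le_sum fun s _ => mul_le_mul_of_nonneg_left (hpure _ (hnorm s) (hsep s)) (hp s)
    _ = c := by rw [← Finset.sum_mul, hpsum, one_mul]

lemma star_dotProduct_smul_outer_add_smul_one_mulVec {φ : (Fin N → Fin 2) → ℂ}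
    (hφ : ∑ x, normSq (φ x) = 1) (z w : ℂ) : star φ ⬝ᵥ ((z • outer φ + w • 1) *ᵥ φ) = z + w := by
  have hself : star φ ⬝ᵥ φ = 1 := by
    simp only [dotProduct, Pi.star_apply, RCLike.star_def, ← normSq_eq_conj_mul_self]
    exact_mod_cast hφ
  rw [add_mulVec, smul_mulVec, smul_mulVec, one_mulVec, dotProduct_add, dotProduct_smul,
    dotProduct_smul, star_dotProduct_outer_mulVec, hself, map_one, ofReal_one, smul_eq_mul,
    smul_eq_mul, mul_one, mul_one]

lemma normSq_sum_mul_le {ι : Type*} (s : Finset ι) (a b : ι → ℂ) :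
    normSq (∑ i ∈ s, a i * b i) ≤ (∑ i ∈ s, normSq (a i)) * ∑ i ∈ s, normSq (b i) := by
  simp only [← Complex.sq_norm]
  calc ‖∑ i ∈ s, a i * b i‖ ^ 2 ≤ (∑ i ∈ s, ‖a i‖ * ‖b i‖) ^ 2 := by
        gcongr
        exact (norm_sum_le _ _).trans_eq (by simp only [norm_mul])
    _ ≤ _ := Finset.sum_mul_sq_le_sq_mul_sq _ _ _

lemma sum_fun_fin_succ {β M : Type*} [Fintype β] [AddCommMonoid M] {n : ℕ}
    (F : (Fin (n + 1) → β) → M) : ∑ x, F x = ∑ b, ∑ x : Fin n → β, F (Matrix.vecCons b x) :=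
  (Fintype.sum_equiv (Fin.consEquiv fun _ => β) _ _ fun _ => rfl).symm.trans
    (Fintype.sum_prod_type _)

lemma star_dicke (N m : ℕ) : star (dicke N m) = dicke N m := by
  ext x
  simp only [Pi.star_apply, dicke, apply_ite star, star_zero, RCLike.star_def, conj_ofReal]

lemma dicke_comp_perm (m : ℕ) (σ : Equiv.Perm (Fin N)) (x : Fin N → Fin 2) :
    dicke N m (x ∘ σ) = dicke N m x := by
  have hcard : (Finset.univ.filter fun i => (x ∘ σ) i = 1).card =
      (Finset.univ.filter fun i => x i = 1).card := by
    simp only [Finset.card_filter, Function.comp_apply,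
      Equiv.sum_comp σ fun i => if x i = 1 then 1 else 0]
  simp only [dicke, hcard]

lemma card_filter_card_filter_eq_choose (N m : ℕ) :
    (Finset.univ.filter fun x : Fin N → Fin 2 =>
      (Finset.univ.filter fun i => x i = 1).card = m).card = N.choose m := by
  calc _ = ((Finset.univ : Finset (Fin N)).powersetCard m).card := by
        refine Finset.card_bij (fun x _ => Finset.univ.filter fun i => x i = 1) ?_ ?_ ?_
        · intro x hx
          simpa using hx
        · intro x _ y _ hxy
          funext i
          have := congrArg (i ∈ ·) hxy
          simp only [Finset.mem_filter, Finset.mem_univ, true_and, eq_iff_iff] at this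
          omega
        · intro s hs
          refine ⟨fun i => if i ∈ s then 1 else 0, ?_, ?_⟩
          · simpa using hs
          · ext i; simp
    _ = N.choose m := by simp

lemma sum_normSq_dicke {m : ℕ} (hm : m ≤ N) : ∑ x, normSq (dicke N m x) = 1 := by
  have hchoose : (0 : ℝ) < N.choose m := by exact_mod_cast Nat.choose_pos hm
  simp only [dicke, apply_ite normSq, normSq_ofReal, map_zero, ← Finset.sum_filter,
    Finset.sum_const, card_filter_card_filter_eq_choose, nsmul_eq_mul, ← mul_inv,
    Real.mul_self_sqrt hchoose.le]
  exact mul_inv_cancel₀ hchoose.ne'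

-- Up to relabelling qubits and blocks, the only partition of four qubits into three blocks
-- is `{0, 1}, {2}, {3}`.
lemma exists_perm_comp_eq_of_surjective (P : Fin 4 → Fin 3) (hP : Function.Surjective P) :
    ∃ σ : Equiv.Perm (Fin 4), ∃ τ : Equiv.Perm (Fin 3), ∀ t, P (σ t) = τ (![0, 0, 1, 2] t) := by
  revert P
  decide

lemma exists_perm_factor_of_kSepPure_three {ψ : (Fin 4 → Fin 2) → ℂ} (hψ : kSepPure 3 ψ) :
    ∃ σ : Equiv.Perm (Fin 4), ∃ (g : Fin 2 → Fin 2 → ℂ) (h u : Fin 2 → ℂ),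
      ∀ x, ψ x = g (x (σ 0)) (x (σ 1)) * h (x (σ 2)) * u (x (σ 3)) := by
  obtain ⟨P, hP, f, hf, hψ⟩ := hψ
  obtain ⟨σ, τ, hPσ⟩ := exists_perm_comp_eq_of_surjective P hP
  have hblock : ∀ l x y, (∀ t, ![0, 0, 1, 2] t = l → x (σ t) = y (σ t)) →
      f (τ l) x = f (τ l) y := by
    intro l x y hxy
    refine hf _ x y fun i hi => ?_
    obtain ⟨t, rfl⟩ := σ.surjective i
    exact hxy t (τ.injective (by rw [← hPσ, hi]))
  let e : Fin 2 → Fin 2 → Fin 2 → Fin 2 → Fin 4 → Fin 2 :=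
    fun b₀ b₁ b₂ b₃ => ![b₀, b₁, b₂, b₃] ∘ σ.symm
  refine ⟨σ, fun b₀ b₁ => f (τ 0) (e b₀ b₁ 0 0), fun b => f (τ 1) (e 0 0 b 0),
    fun b => f (τ 2) (e 0 0 0 b), fun x => ?_⟩
  rw [hψ, ← Equiv.prod_comp τ, Fin.prod_univ_three]
  refine congr_arg₂ (· * ·) (congr_arg₂ (· * ·) ?_ ?_) ?_ <;>
    exact hblock _ _ _ fun t ht => by fin_cases t <;> simp_all [e]

lemma sum_dicke_mul_product (g : Fin 2 → Fin 2 → ℂ) (h u : Fin 2 → ℂ) :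
    ∑ x : Fin 4 → Fin 2, dicke 4 2 x * (g (x 0) (x 1) * h (x 2) * u (x 3)) =
      ((√6)⁻¹ : ℝ) * (g 1 1 * (h 0 * u 0) + (g 1 0 + g 0 1) * (h 1 * u 0 + h 0 * u 1) +
        g 0 0 * (h 1 * u 1)) := by
  simp only [sum_fun_fin_succ, Fin.sum_univ_two, Fintype.sum_unique, dicke]
  simp +decide only [↓reduceIte, Fin.isValue, cons_val_zero, cons_val_one, cons_val, zero_mul,
    add_zero, Nat.choose, Nat.reduceAdd, Nat.cast_ofNat, ofReal_inv, zero_add]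
  ring

lemma sum_normSq_product (g : Fin 2 → Fin 2 → ℂ) (h u : Fin 2 → ℂ) :
    ∑ x : Fin 4 → Fin 2, normSq (g (x 0) (x 1) * h (x 2) * u (x 3)) =
      (∑ b, ∑ c, normSq (g b c)) * (∑ b, normSq (h b)) * ∑ b, normSq (u b) := by
  simp only [sum_fun_fin_succ, Fin.sum_univ_two, Fintype.sum_unique, normSq_mul]
  simp only [Fin.isValue, cons_val_zero, cons_val_one, cons_val]
  ring

lemma normSq_two_qubit_symmetric_le (h₀ h₁ u₀ u₁ : ℂ) :
    normSq (h₀ * u₀) + 2 * normSq (h₁ * u₀ + h₀ * u₁) + normSq (h₁ * u₁) ≤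
      5 / 2 * ((normSq h₀ + normSq h₁) * (normSq u₀ + normSq u₁)) := by
  have hmid : ‖h₁ * u₀ + h₀ * u₁‖ ≤ ‖h₁‖ * ‖u₀‖ + ‖h₀‖ * ‖u₁‖ :=
    (norm_add_le _ _).trans_eq (by simp only [norm_mul])
  have hmid2 := pow_le_pow_left₀ (norm_nonneg _) hmid 2
  simp only [← Complex.sq_norm, norm_mul] at hmid2 ⊢
  nlinarith [sq_nonneg (‖h₀‖ * ‖u₀‖ - ‖h₁‖ * ‖u₁‖), sq_nonneg (‖h₀‖ * ‖u₁‖ - ‖h₁‖ * ‖u₀‖)]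

lemma normSq_dicke_contraction_le (g : Fin 2 → Fin 2 → ℂ) (h u : Fin 2 → ℂ) :
    normSq (g 1 1 * (h 0 * u 0) + (g 1 0 + g 0 1) * (h 1 * u 0 + h 0 * u 1) + g 0 0 * (h 1 * u 1)) ≤
      5 / 2 * ((∑ b, ∑ c, normSq (g b c)) * (∑ b, normSq (h b)) * ∑ b, normSq (u b)) := by
  set w := h 1 * u 0 + h 0 * u 1
  have hcs := normSq_sum_mul_le Finset.univ ![g 1 1, g 1 0, g 0 1, g 0 0]
    ![h 0 * u 0, w, w, h 1 * u 1]
  simp only [Fin.sum_univ_four, Matrix.cons_val] at hcs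
  calc _ = normSq (g 1 1 * (h 0 * u 0) + g 1 0 * w + g 0 1 * w + g 0 0 * (h 1 * u 1)) := by
        congr 1; ring
    _ ≤ (∑ b, ∑ c, normSq (g b c)) * (normSq (h 0 * u 0) + 2 * normSq w + normSq (h 1 * u 1)) :=
        hcs.trans_eq (by simp only [Fin.sum_univ_two]; ring)
    _ ≤ (∑ b, ∑ c, normSq (g b c)) *
          (5 / 2 * ((normSq (h 0) + normSq (h 1)) * (normSq (u 0) + normSq (u 1)))) := by
        gcongr
        · exact Finset.sum_nonneg fun b _ => Finset.sum_nonneg fun c _ => normSq_nonneg _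
        · exact normSq_two_qubit_symmetric_le _ _ _ _
    _ = _ := by simp only [Fin.sum_univ_two]; ring

lemma normSq_star_dicke_dotProduct_le_of_kSepPure_three {ψ : (Fin 4 → Fin 2) → ℂ}
    (hnorm : ∑ x, normSq (ψ x) = 1) (hψ : kSepPure 3 ψ) :
    normSq (star (dicke 4 2) ⬝ᵥ ψ) ≤ 5 / 12 := by
  obtain ⟨σ, g, h, u, hfac⟩ := exists_perm_factor_of_kSepPure_three hψ
  let G : (Fin 4 → Fin 2) → ℂ := fun y => g (y 0) (y 1) * h (y 2) * u (y 3)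
  have hrelabel : ∀ {M : Type} [AddCommMonoid M] (F : (Fin 4 → Fin 2) → M),
      ∑ x, F (x ∘ σ) = ∑ x, F x := fun F => Equiv.sum_comp (σ.symm.arrowCongr (Equiv.refl _)) F
  have hψG : ∀ x, ψ x = G (x ∘ σ) := hfac
  have hoverlap : star (dicke 4 2) ⬝ᵥ ψ = ∑ y, dicke 4 2 y * G y := by
    simp only [star_dicke, dotProduct, hψG]
    simpa only [dicke_comp_perm] using hrelabel fun y => dicke 4 2 y * G y
  have hG : ∑ y, normSq (G y) = 1 := by
    simp only [hψG] at hnorm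
    exact (hrelabel fun y => normSq (G y)).symm.trans hnorm
  rw [sum_normSq_product] at hG
  have hsqrt : (√6)⁻¹ * (√6)⁻¹ = (1 / 6 : ℝ) := by
    rw [← mul_inv, Real.mul_self_sqrt (by norm_num), one_div]
  rw [hoverlap, sum_dicke_mul_product, normSq_mul, normSq_ofReal, hsqrt]
  have := normSq_dicke_contraction_le g h u
  rw [hG] at this
  linarith

end Qubits

open Qubits in
theorem dicke24_noise_not_threeSep_general
    (a : ℝ) (ha : a > 5 / 13) :
    ¬ kSep 3 ((a : ℂ) • outer (dicke 4 2) +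
        (((1 - a) / 16 : ℝ) : ℂ) • (1 : Matrix (Fin 4 → Fin 2) (Fin 4 → Fin 2) ℂ)) := by
  intro hsep
  have hfidelity := re_star_dotProduct_mulVec_le_of_kSep (dicke 4 2)
    (fun _ => normSq_star_dicke_dotProduct_le_of_kSepPure_three) hsep
  rw [star_dotProduct_smul_outer_add_smul_one_mulVec (sum_normSq_dicke (by norm_num))] at hfidelity
  simp only [Complex.add_re, Complex.ofReal_re] at hfidelity
  linarith

open Qubits in
/-- If `a > 5/13` then `a |D_2^4⟩⟨D_2^4| + (1−a) I/16` is not 3-separable. -/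
theorem dicke24_noise_not_threeSep
    (a : ℝ) (ha0 : 0 ≤ a) (ha1 : a ≤ 1) (ha : a > 5 / 13) :
    ¬ kSep 3 ((a : ℂ) • outer (dicke 4 2) +
        (((1 - a) / 16 : ℝ) : ℂ) • (1 : Matrix (Fin 4 → Fin 2) (Fin 4 → Fin 2) ℂ)) :=
  dicke24_noise_not_threeSep_general a ha
end
end

section
/- Consider the four-qubit state ρ^{(D_2^4)} = a |D_2^4⟩⟨D_2^4| + (1−a) I_4 / 16 with 0 ≤ a ≤ 1, where |D_2^4⟩ = 6^{−1/2}(|1100⟩+|1010⟩+|1001⟩+|0110⟩+|0011⟩+|0101⟩). If a > 3/11, then ρ^{(D_2^4)} is not fully separable (not 4-separable). -/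
open scoped BigOperators

noncomputable section

namespace DickeProof

open Qubits

/-- Witness vector: eigenvector of the partial transpose (on qubit 0) of the Dicke
projector for eigenvalue `-1/2`. -/
def wv : (Fin 4 → Fin 2) → ℤ := fun x =>
  if x = ![0,0,0,1] ∨ x = ![0,0,1,0] ∨ x = ![0,1,0,0] then -1
  else if x = ![1,0,1,1] ∨ x = ![1,1,0,1] ∨ x = ![1,1,1,0] then 1 else 0

/-- Replace the 0-th coordinate of `x` by the 0-th coordinate of `y`. -/
def pt0 (x y : Fin 4 → Fin 2) : Fin 4 → Fin 2 := fun i => if i = 0 then y 0 else x i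

def e4 : (Fin 2 × Fin 2 × Fin 2 × Fin 2) ≃ (Fin 4 → Fin 2) where
  toFun p := ![p.1, p.2.1, p.2.2.1, p.2.2.2]
  invFun x := (x 0, x 1, x 2, x 3)
  left_inv p := by rfl
  right_inv x := by funext i; fin_cases i <;> rfl

lemma sum_pi4 {M : Type*} [AddCommMonoid M] (g : (Fin 4 → Fin 2) → M) :
    ∑ x, g x = ∑ a : Fin 2, ∑ b : Fin 2, ∑ c : Fin 2, ∑ d : Fin 2, g ![a,b,c,d] := by
  rw [← Equiv.sum_comp e4 g, Fintype.sum_prod_type]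
  simp only [Fintype.sum_prod_type]
  rfl

/-- The Dicke-state support condition. -/
def dc (z : Fin 4 → Fin 2) : Prop := (Finset.univ.filter fun i => z i = 1).card = 2

instance (z : Fin 4 → Fin 2) : Decidable (dc z) := by unfold dc; infer_instance

lemma qS_eq : (∑ x : Fin 4 → Fin 2, ∑ y : Fin 4 → Fin 2,
    if dc (pt0 x y) ∧ dc (pt0 y x) then wv x * wv y else 0) = -18 := by
  rw [sum_pi4]
  simp only [fun x => sum_pi4 (M := ℤ) (fun y =>
    if dc (pt0 x y) ∧ dc (pt0 y x) then wv x * wv y else 0)]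
  decide

lemma qN_eq : (∑ x : Fin 4 → Fin 2, wv x * wv x) = 6 := by
  rw [sum_pi4]; decide

lemma pt0_eq_iff (x y : Fin 4 → Fin 2) : pt0 x y = pt0 y x ↔ x = y := by
  constructor
  · intro h
    funext i
    by_cases hi : i = 0
    · subst hi
      have h0 := congrFun h 0
      simpa [pt0] using h0.symm
    · have hh := congrFun h i
      simpa [pt0, hi] using hh
  · rintro rfl; rfl

lemma outer_dicke_entry (z w : Fin 4 → Fin 2) :
    outer (dicke 4 2) z w = if dc z ∧ dc w then (1/6 : ℂ) else 0 := by
  have h6 : Nat.choose 4 2 = 6 := by decide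
  have hd : ∀ u : Fin 4 → Fin 2,
      dicke 4 2 u = if dc u then (((Real.sqrt 6)⁻¹ : ℝ) : ℂ) else 0 := by
    intro u
    simp only [dicke, dc, h6, Nat.cast_ofNat]
  have hr : ((Real.sqrt 6)⁻¹ : ℝ) * ((Real.sqrt 6)⁻¹ : ℝ) = 1/6 := by
    rw [← mul_inv, Real.mul_self_sqrt (by norm_num : (0:ℝ) ≤ 6)]
    norm_num
  simp only [outer, Matrix.vecMulVec_apply, Pi.star_apply, hd]
  rw [apply_ite (star : ℂ → ℂ)]
  split_ifs with h1 h2 h3 h4 <;> simp_all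
  have h := congrArg (fun r : ℝ => (r : ℂ)) hr
  push_cast at h
  exact h

/-- For a fully separable pure state, the partial transpose (on qubit 0) of its
projector is again a rank-one "outer product". -/
lemma pt_outer_pure {ψ : (Fin 4 → Fin 2) → ℂ} (h : kSepPure 4 ψ) :
    ∃ φ : (Fin 4 → Fin 2) → ℂ, ∀ x y,
      outer ψ (pt0 x y) (pt0 y x) = φ x * (starRingEnd ℂ) (φ y) := by
  obtain ⟨P, hP, f, hloc, hfac⟩ := h
  have hPinj : Function.Injective P := Finite.injective_iff_surjective.mpr hP
  refine ⟨fun x => (starRingEnd ℂ) (f (P 0) x) * ∏ l ∈ Finset.univ.erase (P 0), f l x, ?_⟩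
  have h1 : ∀ x y : Fin 4 → Fin 2, ψ (pt0 x y) =
      f (P 0) y * ∏ l ∈ Finset.univ.erase (P 0), f l x := by
    intro x y
    rw [hfac, ← Finset.mul_prod_erase Finset.univ _ (Finset.mem_univ (P 0))]
    congr 1
    · refine hloc (P 0) _ y fun i hi => ?_
      have hi0 : i = 0 := hPinj hi
      subst hi0
      simp [pt0]
    · refine Finset.prod_congr rfl fun l hl => hloc l _ x fun i hi => ?_
      have hi0 : i ≠ 0 := by
        rintro rfl
        exact (Finset.mem_erase.mp hl).1 hi.symm
      simp [pt0, hi0]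
  intro x y
  simp only [outer, Matrix.vecMulVec_apply, Pi.star_apply, Complex.star_def]
  rw [h1 x y, h1 y x]
  simp only [map_mul, RingHomCompTriple.comp_apply, Complex.conj_conj, RingHom.id_apply]
  ring

end DickeProof

open Qubits in
/-- If `a > 3/11` then `a |D_2^4⟩⟨D_2^4| + (1−a) I/16` is not fully separable
(not 4-separable). -/
theorem dicke24_noise_not_fullySep
    (a : ℝ) (ha0 : 0 ≤ a) (ha1 : a ≤ 1) (ha : a > 3 / 11) :
    ¬ kSep 4 ((a : ℂ) • outer (dicke 4 2) +
        (((1 - a) / 16 : ℝ) : ℂ) • (1 : Matrix (Fin 4 → Fin 2) (Fin 4 → Fin 2) ℂ)) := by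
  open DickeProof in
  intro hsep
  obtain ⟨n, p, ψ, hp, hpsum, hnorm, hksep, hρ⟩ := hsep
  set c : ℝ := (1 - a) / 16 with hc
  choose φ hφ using fun s => pt_outer_pure (hksep s)
  -- Way A: from the separable decomposition.
  have hA : (∑ x : Fin 4 → Fin 2, ∑ y : Fin 4 → Fin 2, ((wv x : ℤ) : ℂ) *
        ((∑ s, (p s : ℂ) • outer (ψ s)) (pt0 x y) (pt0 y x)) * ((wv y : ℤ) : ℂ))
      = ∑ s, (p s : ℂ) *
      ((∑ x, ((wv x : ℤ) : ℂ) * φ s x) *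
        (starRingEnd ℂ) (∑ x, ((wv x : ℤ) : ℂ) * φ s x)) := by
    calc ∑ x : Fin 4 → Fin 2, ∑ y : Fin 4 → Fin 2, ((wv x : ℤ) : ℂ) *
          ((∑ s, (p s : ℂ) • outer (ψ s)) (pt0 x y) (pt0 y x)) * ((wv y : ℤ) : ℂ)
        = ∑ x, ∑ y, ∑ s, (p s : ℂ) *
            ((((wv x : ℤ) : ℂ) * φ s x) * ((starRingEnd ℂ) (φ s y) * ((wv y : ℤ) : ℂ))) := by
          refine Finset.sum_congr rfl fun x _ => Finset.sum_congr rfl fun y _ => ?_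
          simp only [Matrix.sum_apply, Matrix.smul_apply, smul_eq_mul, hφ]
          rw [Finset.mul_sum, Finset.sum_mul]
          exact Finset.sum_congr rfl fun s _ => by ring
      _ = ∑ x, ∑ s, ∑ y, (p s : ℂ) *
            ((((wv x : ℤ) : ℂ) * φ s x) * ((starRingEnd ℂ) (φ s y) * ((wv y : ℤ) : ℂ))) :=
          Finset.sum_congr rfl fun x _ => Finset.sum_comm
      _ = ∑ s, ∑ x, ∑ y, (p s : ℂ) *
            ((((wv x : ℤ) : ℂ) * φ s x) * ((starRingEnd ℂ) (φ s y) * ((wv y : ℤ) : ℂ))) :=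
          Finset.sum_comm
      _ = ∑ s, (p s : ℂ) *
            ((∑ x, ((wv x : ℤ) : ℂ) * φ s x) *
              (∑ y, (starRingEnd ℂ) (φ s y) * ((wv y : ℤ) : ℂ))) := by
          refine Finset.sum_congr rfl fun s _ => ?_
          rw [Finset.sum_mul_sum, Finset.mul_sum]
          refine Finset.sum_congr rfl fun x _ => ?_
          rw [Finset.mul_sum]
      _ = _ := by
          refine Finset.sum_congr rfl fun s _ => ?_
          congr 1
          congr 1
          rw [map_sum]
          refine Finset.sum_congr rfl fun y _ => ?_
          rw [map_mul, map_intCast]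
          ring
  -- Way B: explicit computation.
  have hB : (∑ x : Fin 4 → Fin 2, ∑ y : Fin 4 → Fin 2, ((wv x : ℤ) : ℂ) *
        (((a : ℂ) • outer (dicke 4 2) + ((c : ℝ) : ℂ) • 1) (pt0 x y) (pt0 y x)) *
        ((wv y : ℤ) : ℂ))
      = ((-3 * a + 6 * c : ℝ) : ℂ) := by
    have hterm : ∀ x y : Fin 4 → Fin 2,
        ((wv x : ℤ) : ℂ) * (((a : ℂ) • outer (dicke 4 2) + ((c : ℝ) : ℂ) • 1)
          (pt0 x y) (pt0 y x)) * ((wv y : ℤ) : ℂ)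
        = (a : ℂ)/6 * (if dc (pt0 x y) ∧ dc (pt0 y x)
              then ((wv x : ℤ) : ℂ) * ((wv y : ℤ) : ℂ) else 0)
          + ((c : ℝ) : ℂ) * (if x = y
              then ((wv x : ℤ) : ℂ) * ((wv y : ℤ) : ℂ) else 0) := by
      intro x y
      simp only [Matrix.add_apply, Matrix.smul_apply, smul_eq_mul, Matrix.one_apply,
        outer_dicke_entry, pt0_eq_iff]
      split_ifs <;> ring
    simp only [hterm]
    rw [Finset.sum_congr rfl fun x _ => Finset.sum_add_distrib, Finset.sum_add_distrib]
    have hS : (∑ x : Fin 4 → Fin 2, ∑ y : Fin 4 → Fin 2,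
        (a : ℂ)/6 * (if dc (pt0 x y) ∧ dc (pt0 y x)
            then ((wv x : ℤ) : ℂ) * ((wv y : ℤ) : ℂ) else 0)) = (a : ℂ)/6 * (-18) := by
      simp only [← Finset.mul_sum]
      congr 1
      have h1 : (∑ x : Fin 4 → Fin 2, ∑ y : Fin 4 → Fin 2,
          (if dc (pt0 x y) ∧ dc (pt0 y x)
            then ((wv x : ℤ) : ℂ) * ((wv y : ℤ) : ℂ) else 0))
          = ((∑ x : Fin 4 → Fin 2, ∑ y : Fin 4 → Fin 2,
              if dc (pt0 x y) ∧ dc (pt0 y x) then wv x * wv y else 0 : ℤ) : ℂ) := by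
        push_cast
        refine Finset.sum_congr rfl fun x _ => Finset.sum_congr rfl fun y _ => ?_
        split_ifs <;> simp
      rw [h1, qS_eq]
      norm_num
    have hN : (∑ x : Fin 4 → Fin 2, ∑ y : Fin 4 → Fin 2,
        ((c : ℝ) : ℂ) * (if x = y
            then ((wv x : ℤ) : ℂ) * ((wv y : ℤ) : ℂ) else 0)) = ((c : ℝ) : ℂ) * 6 := by
      simp only [← Finset.mul_sum]
      congr 1
      have h1 : (∑ x : Fin 4 → Fin 2, ∑ y : Fin 4 → Fin 2,
          (if x = y then ((wv x : ℤ) : ℂ) * ((wv y : ℤ) : ℂ) else 0))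
          = ∑ x : Fin 4 → Fin 2, ((wv x : ℤ) : ℂ) * ((wv x : ℤ) : ℂ) := by
        refine Finset.sum_congr rfl fun x _ => ?_
        simp [Finset.sum_ite_eq, Finset.mem_univ]
      have h2 : (∑ x : Fin 4 → Fin 2, ((wv x : ℤ) : ℂ) * ((wv x : ℤ) : ℂ))
          = ((∑ x : Fin 4 → Fin 2, wv x * wv x : ℤ) : ℂ) := by
        push_cast
        rfl
      rw [h1, h2, qN_eq]
      norm_num
    rw [hS, hN]
    push_cast
    ring
  have hEq : ((-3 * a + 6 * c : ℝ) : ℂ) = ∑ s, (p s : ℂ) *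
      ((∑ x, ((wv x : ℤ) : ℂ) * φ s x) *
        (starRingEnd ℂ) (∑ x, ((wv x : ℤ) : ℂ) * φ s x)) := by
    rw [← hB]
    rw [show ((a : ℂ) • outer (dicke 4 2) + ((c : ℝ) : ℂ) •
        (1 : Matrix (Fin 4 → Fin 2) (Fin 4 → Fin 2) ℂ)) = ∑ s, (p s : ℂ) • outer (ψ s)
      from hρ]
    exact hA
  have hre : (-3 * a + 6 * c : ℝ) ≥ 0 := by
    have h1 := congrArg Complex.re hEq
    rw [Complex.ofReal_re] at h1
    rw [h1, Complex.re_sum]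
    refine Finset.sum_nonneg fun s _ => ?_
    rw [Complex.mul_conj]
    rw [← Complex.ofReal_mul, Complex.ofReal_re]
    exact mul_nonneg (hp s) (Complex.normSq_nonneg _)
  rw [hc] at hre
  linarith

end
end

section
/- Consider the five-qubit state ρ^{(D_2^5)} = a |D_2^5⟩⟨D_2^5| + (1−a) I_5 / 32 with 0 ≤ a ≤ 1. If a > 5/21, then ρ^{(D_2^5)} is not fully separable (not 5-separable). -/
open scoped BigOperators

noncomputable section

namespace DickeProof
open Qubits

abbrev Cfg := Fin 5 → Fin 2

/-- swap the qubit-0 component: `sw x y` takes qubit 0 from `y`, the rest from `x`. -/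
def sw (x y : Cfg) : Cfg := fun i => if i = 0 then y i else x i

def vZ (x : Cfg) : ℤ :=
  if x 0 = 0 ∧ (Finset.univ.filter fun i => x i = 1).card = 1 then 1
  else if x 0 = 1 ∧ (Finset.univ.filter fun i => x i = 1).card = 3 then -1 else 0

def xZ (x : Cfg) : ℤ := if (Finset.univ.filter fun i => x i = 1).card = 2 then 1 else 0

def vC (x : Cfg) : ℂ := (vZ x : ℂ)

/-- the entanglement-witness functional: `⟨v| ρ^{T_0} |v⟩`. -/
def L (ρ : Matrix Cfg Cfg ℂ) : ℂ :=
  ∑ x : Cfg, ∑ y : Cfg, star (vC x) * ρ (sw x y) (sw y x) * vC y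

lemma star_vC (x : Cfg) : star (vC x) = vC x := by
  simp [vC]

def Lhom : Matrix Cfg Cfg ℂ →+ ℂ where
  toFun := L
  map_zero' := by unfold L; simp
  map_add' := by
    intro M M'
    unfold L
    simp only [Matrix.add_apply, mul_add, add_mul, Finset.sum_add_distrib]

lemma L_sum {n : ℕ} (M : Fin n → Matrix Cfg Cfg ℂ) :
    L (∑ s, M s) = ∑ s, L (M s) := map_sum Lhom M Finset.univ

lemma L_smul (c : ℂ) (M : Matrix Cfg Cfg ℂ) : L (c • M) = c * L M := by
  unfold L
  simp only [Matrix.smul_apply, smul_eq_mul, Finset.mul_sum]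
  exact Finset.sum_congr rfl fun x _ => Finset.sum_congr rfl fun y _ => by ring

lemma L_add (M M' : Matrix Cfg Cfg ℂ) : L (M + M') = L M + L M' := by
  unfold L
  simp only [Matrix.add_apply, mul_add, add_mul, Finset.sum_add_distrib]

/-- a fully separable pure state factorizes into single-qubit functions. -/
lemma exists_prod {ψ : Cfg → ℂ} (h : kSepPure 5 ψ) :
    ∃ g : Fin 5 → Fin 2 → ℂ, ∀ x, ψ x = ∏ i, g i (x i) := by
  obtain ⟨P, hsurj, f, hdep, hprod⟩ := h
  have hbij : Function.Bijective P := Finite.surjective_iff_bijective.mp hsurj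
  refine ⟨fun i b => f (P i) (fun _ => b), fun x => ?_⟩
  rw [hprod]
  rw [← Fintype.prod_bijective P hbij (fun i => f (P i) x) (fun l => f l x) (fun _ => rfl)]
  refine Finset.prod_congr rfl fun i _ => ?_
  exact hdep (P i) x (fun _ => x i) (fun j hj => by rw [hbij.injective hj])

/-- positivity of the witness on fully separable pure states. -/
lemma L_outer_nonneg {ψ : Cfg → ℂ} (h : kSepPure 5 ψ) :
    ∃ r : ℝ, 0 ≤ r ∧ L (outer ψ) = (r : ℂ) := by
  obtain ⟨g, hg⟩ := exists_prod h
  set h' : Fin 5 → Fin 2 → ℂ := fun i b => if i = 0 then star (g i b) else g i b with hh'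
  set Φ : Cfg → ℂ := fun x => ∏ i, h' i (x i) with hΦ
  set z : ℂ := ∑ x : Cfg, star (vC x) * Φ x with hz
  refine ⟨Complex.normSq z, Complex.normSq_nonneg z, ?_⟩
  have key : ∀ x y : Cfg, ψ (sw x y) * star (ψ (sw y x)) = Φ x * star (Φ y) := by
    intro x y
    rw [hg, hg, hΦ]
    simp only [star_prod, ← Finset.prod_mul_distrib]
    refine Finset.prod_congr rfl fun i _ => ?_
    by_cases hi : i = 0
    · subst hi
      simp [sw, hh', star_star]
      ring
    · simp only [sw, if_neg hi, hh']
  have expand : L (outer ψ)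
      = ∑ x : Cfg, ∑ y : Cfg, (star (vC x) * Φ x) * star (star (vC y) * Φ y) := by
    unfold L
    refine Finset.sum_congr rfl fun x _ => Finset.sum_congr rfl fun y _ => ?_
    simp only [outer, Matrix.vecMulVec_apply, Pi.star_apply]
    rw [show ψ (sw x y) * star (ψ (sw y x)) = Φ x * star (Φ y) from key x y]
    simp only [star_mul, star_star]
    ring
  rw [expand]
  have : ∑ x : Cfg, ∑ y : Cfg, (star (vC x) * Φ x) * star (star (vC y) * Φ y)
      = z * star z := by
    rw [hz, star_sum, Finset.sum_mul_sum]
  rw [this, Complex.star_def, Complex.mul_conj, Complex.normSq_eq_norm_sq]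

lemma SZ_val : (∑ x : Cfg, ∑ y : Cfg, vZ x * xZ (sw x y) * xZ (sw y x) * vZ y) = -48 := by
  decide

lemma TZ_val : (∑ x : Cfg, ∑ y : Cfg,
    vZ x * (if sw x y = sw y x then 1 else 0) * vZ y) = 10 := by
  decide

lemma dicke_eq (x : Cfg) :
    dicke 5 2 x = (((Real.sqrt 10)⁻¹ : ℝ) : ℂ) * (xZ x : ℂ) := by
  unfold dicke xZ
  have h10 : Nat.choose 5 2 = 10 := by decide
  rw [h10]
  split <;> simp

lemma L_one : L (1 : Matrix Cfg Cfg ℂ) = (10 : ℂ) := by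
  have : L (1 : Matrix Cfg Cfg ℂ)
      = ((∑ x : Cfg, ∑ y : Cfg,
          vZ x * (if sw x y = sw y x then 1 else 0) * vZ y : ℤ) : ℂ) := by
    unfold L
    rw [Int.cast_sum]
    refine Finset.sum_congr rfl fun x _ => ?_
    rw [Int.cast_sum]
    refine Finset.sum_congr rfl fun y _ => ?_
    rw [star_vC, Matrix.one_apply]
    unfold vC
    push_cast [apply_ite (fun n : ℤ => (n : ℂ))]
    split <;> ring
  rw [this, TZ_val]
  norm_num

lemma L_dicke : L (outer (dicke 5 2)) = (((Real.sqrt 10)⁻¹ : ℝ) : ℂ)^2 * (-48 : ℂ) := by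
  have : L (outer (dicke 5 2))
      = (((Real.sqrt 10)⁻¹ : ℝ) : ℂ)^2
        * ((∑ x : Cfg, ∑ y : Cfg, vZ x * xZ (sw x y) * xZ (sw y x) * vZ y : ℤ) : ℂ) := by
    unfold L
    push_cast
    rw [Finset.mul_sum]
    refine Finset.sum_congr rfl fun x _ => ?_
    rw [Finset.mul_sum]
    refine Finset.sum_congr rfl fun y _ => ?_
    rw [star_vC]
    unfold vC
    simp only [outer, Matrix.vecMulVec_apply, Pi.star_apply, dicke_eq, star_mul']
    simp only [star_intCast, Complex.star_def, Complex.conj_ofReal]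
    push_cast
    ring
  rw [this, SZ_val]
  norm_num

end DickeProof


open Qubits in
/-- If `a > 5/21` then `a |D_2^5⟩⟨D_2^5| + (1−a) I/32` is not fully separable
(not 5-separable). -/
theorem dicke25_noise_not_fullySep
    (a : ℝ) (ha0 : 0 ≤ a) (ha1 : a ≤ 1) (ha : a > 5 / 21) :
    ¬ kSep 5 ((a : ℂ) • outer (dicke 5 2) +
        (((1 - a) / 32 : ℝ) : ℂ) • (1 : Matrix (Fin 5 → Fin 2) (Fin 5 → Fin 2) ℂ)) := by
  intro hkSep
  obtain ⟨n, p, ψ, hp0, _hp1, _hnorm, hsep, hρ⟩ := hkSep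
  choose r hr0 hre using fun s => DickeProof.L_outer_nonneg (hsep s)
  have hL := congrArg DickeProof.L hρ
  rw [DickeProof.L_add, DickeProof.L_smul, DickeProof.L_smul, DickeProof.L_one,
      DickeProof.L_dicke, DickeProof.L_sum] at hL
  simp_rw [DickeProof.L_smul, hre] at hL
  have hsq : ((Real.sqrt 10)⁻¹ : ℝ)^2 = 1/10 := by
    rw [inv_pow, Real.sq_sqrt] <;> norm_num
  have h2 : ((((Real.sqrt 10)⁻¹ : ℝ)) : ℂ)^2 = ((1/10 : ℝ) : ℂ) := by
    rw [← Complex.ofReal_pow, hsq]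
  rw [h2] at hL
  have key : a * (1/10) * (-48) + (1 - a)/32 * 10 = ∑ s, p s * r s := by
    apply Complex.ofReal_injective
    push_cast at hL ⊢
    linear_combination hL
  have hnn : 0 ≤ ∑ s, p s * r s :=
    Finset.sum_nonneg fun s _ => mul_nonneg (hp0 s) (hr0 s)
  linarith
end
end

section
/- Let |φ⟩ = (1/2)(|0011⟩ + |0101⟩ + |0110⟩ + |1010⟩) ∈ (ℂ²)^{⊗4} and consider the four-qubit state ρ = a |φ⟩⟨φ| + (1−a) I_16 / 16 with 0 ≤ a ≤ 1, where I_16 is the identity operator on (ℂ²)^{⊗4}. If a > 7/19, then ρ is not 3-separable. -/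
open scoped BigOperators

noncomputable section

/-! If qubit `i` is a block of its own in a product state `ψ`, then `ψ x ψ y = ψ x' ψ y'`, where
`x'`, `y'` arise from `x`, `y` by exchanging their `i`-th bits. A 3-separable pure state on four
qubits has two such singleton blocks, so by weighted AM–GM every product `|ψ x| |ψ y|` with
`x ≠ y` in the support of `φ` is bounded by squared amplitudes of other basis states. With suitable
weights `w` this yields one inequality `∑ |ψ x| |ψ y| ≤ ∑ w c |ψ c|²`, whichever qubits are the
singletons. Through the triangle inequality for the off-diagonal entries it passes to mixtures:
a 3-separable `ρ` satisfies `∑ |ρ x y| ≤ ∑ w c ρ c c`. For the noisy state this reads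
`3a/2 ≤ a/2 + 37 (1 - a)/64`, i.e. `a ≤ 37/101 < 7/19`. -/

namespace Qubits

section Witness

variable {N k : ℕ}

def IsSingletonBlock (P : Fin N → Fin k) (i : Fin N) : Prop :=
  ∀ j, P j = P i → j = i

def IsProductAlong (P : Fin N → Fin k) (ψ : (Fin N → Fin 2) → ℂ) : Prop :=
  ∃ f : Fin k → (Fin N → Fin 2) → ℂ,
    (∀ l x y, (∀ i, P i = l → x i = y i) → f l x = f l y) ∧ ∀ x, ψ x = ∏ l, f l x

theorem kSepPure_iff {ψ : (Fin N → Fin 2) → ℂ} :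
    kSepPure k ψ ↔ ∃ P : Fin N → Fin k, Function.Surjective P ∧ IsProductAlong P ψ :=
  Iff.rfl

theorem IsProductAlong.mul_eq_mul_update {P : Fin N → Fin k} {ψ : (Fin N → Fin 2) → ℂ}
    (hψ : IsProductAlong P ψ) {i : Fin N} (hi : IsSingletonBlock P i) (x y : Fin N → Fin 2) :
    ψ x * ψ y = ψ (Function.update x i (y i)) * ψ (Function.update y i (x i)) := by
  obtain ⟨f, hf, hψf⟩ := hψ
  simp only [hψf, ← Finset.prod_mul_distrib]
  refine Finset.prod_congr rfl fun l _ => ?_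
  by_cases hl : l = P i
  · subst hl
    rw [hf _ (Function.update x i (y i)) y, hf _ (Function.update y i (x i)) x, mul_comm] <;>
      · intro j hj
        simp [hi j hj]
  · have hne : ∀ j, P j = l → j ≠ i := by
      rintro j hj rfl
      exact hl hj.symm
    rw [hf l (Function.update x i (y i)) x, hf l (Function.update y i (x i)) y] <;>
      · intro j hj
        simp [hne j hj]

theorem IsProductAlong.two_mul_norm_mul_le {P : Fin N → Fin k} {ψ : (Fin N → Fin 2) → ℂ}
    (hψ : IsProductAlong P ψ) {i : Fin N} (hi : IsSingletonBlock P i) {t : ℝ} (ht : 0 < t)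
    (x y z w : Fin N → Fin 2) (hz : Function.update x i (y i) = z := by decide)
    (hw : Function.update y i (x i) = w := by decide) :
    2 * ‖ψ x‖ * ‖ψ y‖ ≤ t * ‖ψ z‖ ^ 2 + t⁻¹ * ‖ψ w‖ ^ 2 := by
  rw [mul_assoc, ← norm_mul, hψ.mul_eq_mul_update hi, hz, hw, norm_mul, ← mul_assoc]
  exact two_mul_le_add_mul_sq ht

theorem norm_mixture_apply_le {n : ℕ} (p : Fin n → ℝ) (hp : ∀ s, 0 ≤ p s)
    (ψ : Fin n → (Fin N → Fin 2) → ℂ) (x y : Fin N → Fin 2) :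
    ‖(∑ s, (p s : ℂ) • outer (ψ s)) x y‖ ≤ ∑ s, p s * (‖ψ s x‖ * ‖ψ s y‖) := by
  simp only [Matrix.sum_apply, Matrix.smul_apply, outer, Matrix.vecMulVec_apply,
    Pi.star_apply, smul_eq_mul]
  refine (norm_sum_le _ _).trans_eq (Finset.sum_congr rfl fun s _ => ?_)
  rw [norm_mul, norm_mul, norm_star, Complex.norm_of_nonneg (hp s)]

theorem re_mixture_apply_self {n : ℕ} (p : Fin n → ℝ) (ψ : Fin n → (Fin N → Fin 2) → ℂ)
    (x : Fin N → Fin 2) :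
    ((∑ s, (p s : ℂ) • outer (ψ s)) x x).re = ∑ s, p s * ‖ψ s x‖ ^ 2 := by
  simp [Matrix.sum_apply, outer, Matrix.vecMulVec_apply, Complex.mul_conj', Complex.re_sum,
    ← Complex.ofReal_pow]

theorem kSep.sum_norm_le {α β : Type*} [Fintype α] [Fintype β]
    {ρ : Matrix (Fin N → Fin 2) (Fin N → Fin 2) ℂ} (hρ : kSep k ρ)
    (e : α → (Fin N → Fin 2) × (Fin N → Fin 2)) (w : β → ℝ) (c : β → Fin N → Fin 2)
    (hw : ∀ ψ, kSepPure k ψ → ∑ j, ‖ψ (e j).1‖ * ‖ψ (e j).2‖ ≤ ∑ j, w j * ‖ψ (c j)‖ ^ 2) :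
    ∑ j, ‖ρ (e j).1 (e j).2‖ ≤ ∑ j, w j * (ρ (c j) (c j)).re := by
  obtain ⟨n, p, ψ, hp, -, -, hψ, rfl⟩ := hρ
  calc ∑ j, ‖(∑ s, (p s : ℂ) • outer (ψ s)) (e j).1 (e j).2‖
      ≤ ∑ j, ∑ s, p s * (‖ψ s (e j).1‖ * ‖ψ s (e j).2‖) :=
        Finset.sum_le_sum fun j _ => norm_mixture_apply_le p hp ψ _ _
    _ = ∑ s, p s * ∑ j, ‖ψ s (e j).1‖ * ‖ψ s (e j).2‖ := by
        rw [Finset.sum_comm]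
        simp_rw [Finset.mul_sum]
    _ ≤ ∑ s, p s * ∑ j, w j * ‖ψ s (c j)‖ ^ 2 :=
        Finset.sum_le_sum fun s _ => mul_le_mul_of_nonneg_left (hw _ (hψ s)) (hp s)
    _ = ∑ j, w j * ((∑ s, (p s : ℂ) • outer (ψ s)) (c j) (c j)).re := by
        simp_rw [re_mixture_apply_self, Finset.mul_sum]
        rw [Finset.sum_comm]
        exact Finset.sum_congr rfl fun _ _ => Finset.sum_congr rfl fun _ _ => by ring

end Witness

theorem exists_two_singletonBlocks {P : Fin 4 → Fin 3} (hP : Function.Surjective P) :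
    ∃ i j, i < j ∧ IsSingletonBlock P i ∧ IsSingletonBlock P j := by
  unfold IsSingletonBlock
  revert P
  decide

def chiState : (Fin 4 → Fin 2) → ℂ := fun x =>
  if x = ![0, 0, 1, 1] ∨ x = ![0, 1, 0, 1] ∨ x = ![0, 1, 1, 0] ∨ x = ![1, 0, 1, 0] then 1 / 2
  else 0

def chiNoise (a : ℝ) : Matrix (Fin 4 → Fin 2) (Fin 4 → Fin 2) ℂ :=
  (a : ℂ) • outer chiState + (((1 - a) / 16 : ℝ) : ℂ) • 1

def chiPairs : Fin 6 → (Fin 4 → Fin 2) × (Fin 4 → Fin 2) :=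
  ![(![0,0,1,1], ![0,1,0,1]), (![0,0,1,1], ![0,1,1,0]), (![0,0,1,1], ![1,0,1,0]),
    (![0,1,0,1], ![0,1,1,0]), (![0,1,0,1], ![1,0,1,0]), (![0,1,1,0], ![1,0,1,0])]

/-- Each weight is the largest coefficient that `|ψ c|²` receives, over the six choices of
singleton qubits, in the AM–GM bounds of `chi_witness_of_kSepPure`. -/
def chiWeights : Fin 11 → ℝ := ![1/2, 1/2, 1/2, 1/2, 1, 1, 3/2, 5/4, 1, 1, 1/2]

def chiDiag : Fin 11 → Fin 4 → Fin 2 :=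
  ![![0,0,1,1], ![0,1,0,1], ![0,1,1,0], ![1,0,1,0], ![0,1,1,1], ![0,0,0,1], ![0,0,1,0],
    ![0,1,0,0], ![1,0,1,1], ![1,1,1,0], ![1,1,0,1]]

theorem chi_witness_of_kSepPure {ψ : (Fin 4 → Fin 2) → ℂ} (h : kSepPure 3 ψ) :
    ∑ j, ‖ψ (chiPairs j).1‖ * ‖ψ (chiPairs j).2‖ ≤ ∑ j, chiWeights j * ‖ψ (chiDiag j)‖ ^ 2 := by
  obtain ⟨P, hP, hψ⟩ := kSepPure_iff.mp h
  obtain ⟨i, j, hij, hi, hj⟩ := exists_two_singletonBlocks hP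
  simp only [Fin.sum_univ_succ, Fin.sum_univ_zero, chiPairs, chiWeights, chiDiag,
    Matrix.cons_val_zero, Matrix.cons_val_succ]
  fin_cases i <;> fin_cases j <;> try exact absurd hij (by decide)
  · nlinarith [hψ.two_mul_norm_mul_le hj one_pos ![0,0,1,1] ![0,1,0,1] ![0,1,1,1] ![0,0,0,1],
      hψ.two_mul_norm_mul_le hj one_pos ![0,0,1,1] ![0,1,1,0] ![0,1,1,1] ![0,0,1,0],
      hψ.two_mul_norm_mul_le hi one_pos ![0,0,1,1] ![1,0,1,0] ![1,0,1,1] ![0,0,1,0],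
      two_mul_le_add_sq ‖ψ ![0,1,0,1]‖ ‖ψ ![0,1,1,0]‖,
      hψ.two_mul_norm_mul_le hj one_pos ![0,1,0,1] ![1,0,1,0] ![0,0,0,1] ![1,1,1,0],
      hψ.two_mul_norm_mul_le hi one_pos ![0,1,1,0] ![1,0,1,0] ![1,1,1,0] ![0,0,1,0]]
  · nlinarith [hψ.two_mul_norm_mul_le hj one_pos ![0,0,1,1] ![0,1,0,1] ![0,0,0,1] ![0,1,1,1],
      two_mul_le_add_sq ‖ψ ![0,0,1,1]‖ ‖ψ ![0,1,1,0]‖,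
      hψ.two_mul_norm_mul_le hi one_pos ![0,0,1,1] ![1,0,1,0] ![1,0,1,1] ![0,0,1,0],
      hψ.two_mul_norm_mul_le hj one_pos ![0,1,0,1] ![0,1,1,0] ![0,1,1,1] ![0,1,0,0],
      hψ.two_mul_norm_mul_le hi one_pos ![0,1,0,1] ![1,0,1,0] ![1,1,0,1] ![0,0,1,0],
      hψ.two_mul_norm_mul_le hi one_pos ![0,1,1,0] ![1,0,1,0] ![1,1,1,0] ![0,0,1,0]]
  · nlinarith [two_mul_le_add_sq ‖ψ ![0,0,1,1]‖ ‖ψ ![0,1,0,1]‖,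
      hψ.two_mul_norm_mul_le hj one_pos ![0,0,1,1] ![0,1,1,0] ![0,0,1,0] ![0,1,1,1],
      hψ.two_mul_norm_mul_le hj one_pos ![0,0,1,1] ![1,0,1,0] ![0,0,1,0] ![1,0,1,1],
      hψ.two_mul_norm_mul_le hj one_pos ![0,1,0,1] ![0,1,1,0] ![0,1,0,0] ![0,1,1,1],
      hψ.two_mul_norm_mul_le hj one_pos ![0,1,0,1] ![1,0,1,0] ![0,1,0,0] ![1,0,1,1],
      hψ.two_mul_norm_mul_le hi one_pos ![0,1,1,0] ![1,0,1,0] ![1,1,1,0] ![0,0,1,0]]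
  · nlinarith [hψ.two_mul_norm_mul_le hi one_pos ![0,0,1,1] ![0,1,0,1] ![0,1,1,1] ![0,0,0,1],
      hψ.two_mul_norm_mul_le hi one_half_pos ![0,0,1,1] ![0,1,1,0] ![0,1,1,1] ![0,0,1,0],
      two_mul_le_add_sq ‖ψ ![0,0,1,1]‖ ‖ψ ![1,0,1,0]‖,
      hψ.two_mul_norm_mul_le hj one_half_pos ![0,1,0,1] ![0,1,1,0] ![0,1,1,1] ![0,1,0,0],
      hψ.two_mul_norm_mul_le hi one_pos ![0,1,0,1] ![1,0,1,0] ![0,0,0,1] ![1,1,1,0],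
      hψ.two_mul_norm_mul_le hi one_pos ![0,1,1,0] ![1,0,1,0] ![0,0,1,0] ![1,1,1,0]]
  · have ht : (0 : ℝ) < 2 / 3 := by norm_num
    have ht' : (0 : ℝ) < 3 / 2 := by norm_num
    nlinarith [hψ.two_mul_norm_mul_le hi ht ![0,0,1,1] ![0,1,0,1] ![0,1,1,1] ![0,0,0,1],
      hψ.two_mul_norm_mul_le hi ht ![0,0,1,1] ![0,1,1,0] ![0,1,1,1] ![0,0,1,0],
      hψ.two_mul_norm_mul_le hj one_pos ![0,0,1,1] ![1,0,1,0] ![0,0,1,0] ![1,0,1,1],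
      hψ.two_mul_norm_mul_le hj ht' ![0,1,0,1] ![0,1,1,0] ![0,1,0,0] ![0,1,1,1],
      hψ.two_mul_norm_mul_le hj one_pos ![0,1,0,1] ![1,0,1,0] ![0,1,0,0] ![1,0,1,1],
      hψ.two_mul_norm_mul_le hi one_half_pos ![0,1,1,0] ![1,0,1,0] ![0,0,1,0] ![1,1,1,0]]
  · nlinarith [hψ.two_mul_norm_mul_le hi two_pos ![0,0,1,1] ![0,1,0,1] ![0,0,0,1] ![0,1,1,1],
      hψ.two_mul_norm_mul_le hj two_pos ![0,0,1,1] ![0,1,1,0] ![0,0,1,0] ![0,1,1,1],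
      hψ.two_mul_norm_mul_le hj one_pos ![0,0,1,1] ![1,0,1,0] ![0,0,1,0] ![1,0,1,1],
      hψ.two_mul_norm_mul_le hi one_pos ![0,1,0,1] ![0,1,1,0] ![0,1,1,1] ![0,1,0,0],
      hψ.two_mul_norm_mul_le hj one_pos ![0,1,0,1] ![1,0,1,0] ![0,1,0,0] ![1,0,1,1],
      two_mul_le_add_sq ‖ψ ![0,1,1,0]‖ ‖ψ ![1,0,1,0]‖]

theorem sum_norm_chiNoise_chiPairs (a : ℝ) :
    ∑ j, ‖chiNoise a (chiPairs j).1 (chiPairs j).2‖ = 3 / 2 * |a| := by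
  simp [Fin.sum_univ_succ, chiNoise, chiState, chiPairs, outer, Matrix.vecMulVec_apply,
    Matrix.one_apply]
  ring

theorem sum_chiWeights_mul_re_chiNoise (a : ℝ) :
    ∑ j, chiWeights j * (chiNoise a (chiDiag j) (chiDiag j)).re = a / 2 + 37 / 64 * (1 - a) := by
  simp [Fin.sum_univ_succ, chiNoise, chiState, chiWeights, chiDiag, outer,
    Matrix.vecMulVec_apply]
  ring

end Qubits

open Qubits in
theorem fourQubit_chi_noise_not_threeSep_general
    (φ : (Fin 4 → Fin 2) → ℂ)
    (hφ : φ = fun x => if x = ![0, 0, 1, 1] ∨ x = ![0, 1, 0, 1] ∨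
        x = ![0, 1, 1, 0] ∨ x = ![1, 0, 1, 0] then (1 / 2 : ℂ) else 0)
    (a : ℝ) (ha : a > 7 / 19) :
    ¬ kSep 3 ((a : ℂ) • outer φ +
        (((1 - a) / 16 : ℝ) : ℂ) • (1 : Matrix (Fin 4 → Fin 2) (Fin 4 → Fin 2) ℂ)) := by
  subst hφ
  intro hsep
  have h := kSep.sum_norm_le (ρ := chiNoise a) hsep chiPairs chiWeights chiDiag
    fun _ => chi_witness_of_kSepPure
  rw [sum_norm_chiNoise_chiPairs, sum_chiWeights_mul_re_chiNoise, abs_of_pos (by linarith)] at h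
  linarith

open Qubits in
/-- For `|φ⟩ = ½(|0011⟩+|0101⟩+|0110⟩+|1010⟩)`: if `a > 7/19` then
`a |φ⟩⟨φ| + (1−a) I/16` is not 3-separable. -/
theorem fourQubit_chi_noise_not_threeSep
    (φ : (Fin 4 → Fin 2) → ℂ)
    (hφ : φ = fun x => if x = ![0, 0, 1, 1] ∨ x = ![0, 1, 0, 1] ∨
        x = ![0, 1, 1, 0] ∨ x = ![1, 0, 1, 0] then (1 / 2 : ℂ) else 0)
    (a : ℝ) (ha0 : 0 ≤ a) (ha1 : a ≤ 1) (ha : a > 7 / 19) :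
    ¬ kSep 3 ((a : ℂ) • outer φ +
        (((1 - a) / 16 : ℝ) : ℂ) • (1 : Matrix (Fin 4 → Fin 2) (Fin 4 → Fin 2) ℂ)) :=
  fourQubit_chi_noise_not_threeSep_general φ hφ a ha
end
end

section
/- Let |φ⟩ = (1/2)(|0011⟩ + |0101⟩ + |0110⟩ + |1010⟩) ∈ (ℂ²)^{⊗4} and consider the four-qubit state ρ = a |φ⟩⟨φ| + (1−a) I_16 / 16 with 0 ≤ a ≤ 1, where I_16 is the identity operator on (ℂ²)^{⊗4}. If a > 1/5, then ρ is not fully separable (not 4-separable). -/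
open scoped BigOperators

noncomputable section

/-! A fully separable pure state satisfies `ψ x * ψ y = ψ x' * ψ y'` whenever `x', y'` arise from
`x, y` by exchanging some of their coordinates, so `|ψ x| |ψ y| ≤ (|ψ x'|² + |ψ y'|²) / 2`. Averaging
over a decomposition of `ρ` gives `|ρ x y| ≤ (ρ x' x' + ρ y' y') / 2` for every fully separable `ρ`.
For `x = 0011, y = 0101, x' = 0001, y' = 0111` the noisy state has `|ρ x y| = a / 4` and
`ρ x' x' = ρ y' y' = (1 - a) / 16`, which violates the bound as soon as `a > 1 / 5`. -/

namespace Qubits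

variable {N : ℕ}

@[simp]
theorem outer_apply (ψ : (Fin N → Fin 2) → ℂ) (x y : Fin N → Fin 2) :
    outer ψ x y = ψ x * star (ψ y) :=
  rfl

theorem re_outer_apply_self (ψ : (Fin N → Fin 2) → ℂ) (x : Fin N → Fin 2) :
    (outer ψ x x).re = ‖ψ x‖ ^ 2 := by
  rw [outer_apply, Complex.star_def, Complex.mul_conj, Complex.ofReal_re,
    Complex.normSq_eq_norm_sq]

theorem kSepPure.apply_mul_apply_eq_of_swap {ψ : (Fin N → Fin 2) → ℂ} (hψ : kSepPure N ψ)
    {x y x' y' : Fin N → Fin 2}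
    (hswap : ∀ i, (x' i = x i ∧ y' i = y i) ∨ (x' i = y i ∧ y' i = x i)) :
    ψ x' * ψ y' = ψ x * ψ y := by
  obtain ⟨P, hP, f, hf, hψf⟩ := hψ
  have hPinj : P.Injective := Finite.injective_iff_surjective.mpr hP
  simp only [hψf, ← Finset.prod_mul_distrib]
  refine Finset.prod_congr rfl fun l _ ↦ ?_
  obtain ⟨i, rfl⟩ := hP l
  -- the part `P i` of the partition is the single qubit `i`
  have hfi : ∀ u v : Fin N → Fin 2, u i = v i → f (P i) u = f (P i) v :=
    fun u v huv ↦ hf _ u v fun j hj ↦ hPinj hj ▸ huv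
  rcases hswap i with ⟨hx, hy⟩ | ⟨hx, hy⟩
  · rw [hfi x' x hx, hfi y' y hy]
  · rw [hfi x' y hx, hfi y' x hy, mul_comm]

theorem kSepPure.norm_outer_apply_le_of_swap {ψ : (Fin N → Fin 2) → ℂ} (hψ : kSepPure N ψ)
    {x y x' y' : Fin N → Fin 2}
    (hswap : ∀ i, (x' i = x i ∧ y' i = y i) ∨ (x' i = y i ∧ y' i = x i)) :
    ‖outer ψ x y‖ ≤ ((outer ψ x' x').re + (outer ψ y' y').re) / 2 := by
  have hnorm : ‖outer ψ x y‖ = ‖ψ x'‖ * ‖ψ y'‖ := by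
    rw [outer_apply, norm_mul, norm_star, ← norm_mul, ← norm_mul,
      hψ.apply_mul_apply_eq_of_swap hswap]
  rw [hnorm, re_outer_apply_self, re_outer_apply_self]
  nlinarith [sq_nonneg (‖ψ x'‖ - ‖ψ y'‖)]

theorem kSep.norm_apply_le_of_swap {ρ : Matrix (Fin N → Fin 2) (Fin N → Fin 2) ℂ}
    (hρ : kSep N ρ) {x y x' y' : Fin N → Fin 2}
    (hswap : ∀ i, (x' i = x i ∧ y' i = y i) ∨ (x' i = y i ∧ y' i = x i)) :
    ‖ρ x y‖ ≤ ((ρ x' x').re + (ρ y' y').re) / 2 := by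
  obtain ⟨n, p, ψ, hp, -, -, hsep, rfl⟩ := hρ
  simp only [Matrix.sum_apply, Matrix.smul_apply, smul_eq_mul, Complex.re_sum,
    Complex.re_ofReal_mul, ← Finset.sum_add_distrib, Finset.sum_div]
  refine (norm_sum_le _ _).trans (Finset.sum_le_sum fun s _ ↦ ?_)
  rw [norm_mul, Complex.norm_real, Real.norm_of_nonneg (hp s), ← mul_add, mul_div_assoc]
  exact mul_le_mul_of_nonneg_left ((hsep s).norm_outer_apply_le_of_swap hswap) (hp s)

end Qubits

open Qubits in
theorem fourQubit_chi_noise_not_fullySep_general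
    (φ : (Fin 4 → Fin 2) → ℂ)
    (hφ : φ = fun x => if x = ![0, 0, 1, 1] ∨ x = ![0, 1, 0, 1] ∨
        x = ![0, 1, 1, 0] ∨ x = ![1, 0, 1, 0] then (1 / 2 : ℂ) else 0)
    (a : ℝ) (ha0 : 0 ≤ a) (ha : a > 1 / 5) :
    ¬ kSep 4 ((a : ℂ) • outer φ +
        (((1 - a) / 16 : ℝ) : ℂ) • (1 : Matrix (Fin 4 → Fin 2) (Fin 4 → Fin 2) ℂ)) := by
  intro hsep
  have hbound := hsep.norm_apply_le_of_swap (x := ![0, 0, 1, 1]) (y := ![0, 1, 0, 1])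
    (x' := ![0, 0, 0, 1]) (y' := ![0, 1, 1, 1]) (by decide)
  simp only [hφ, Matrix.add_apply, Matrix.smul_apply, Matrix.one_apply, outer_apply] at hbound
  norm_num [abs_of_nonneg ha0] at hbound
  linarith

open Qubits in
/-- For `|φ⟩ = ½(|0011⟩+|0101⟩+|0110⟩+|1010⟩)`: if `a > 1/5` then
`a |φ⟩⟨φ| + (1−a) I/16` is not fully separable (not 4-separable). -/
theorem fourQubit_chi_noise_not_fullySep
    (φ : (Fin 4 → Fin 2) → ℂ)
    (hφ : φ = fun x => if x = ![0, 0, 1, 1] ∨ x = ![0, 1, 0, 1] ∨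
        x = ![0, 1, 1, 0] ∨ x = ![1, 0, 1, 0] then (1 / 2 : ℂ) else 0)
    (a : ℝ) (ha0 : 0 ≤ a) (ha1 : a ≤ 1) (ha : a > 1 / 5) :
    ¬ kSep 4 ((a : ℂ) • outer φ +
        (((1 - a) / 16 : ℝ) : ℂ) • (1 : Matrix (Fin 4 → Fin 2) (Fin 4 → Fin 2) ℂ)) :=
  fourQubit_chi_noise_not_fullySep_general φ hφ a ha0 ha
end
end
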